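/- arXiv:1001.0384 — 7 statements merged into one kernel-verified Lean document; each statement's English description precedes it below -/
import Mathlib

section
/- For a finite simple graph G and two adjacent vertices u and v, the pivot piv(G;u,v) is isomorphic (indeed equal, on the same vertex set) to the triple local complement LC(LC(LC(G;u);v);u). -/
/-- The local complement `LC(G;v)`: toggle the adjacency of every pair of
distinct vertices that are both adjacent to `v`. -/
def SimpleGraph.localComp {V : Type*} (G : SimpleGraph V) (v : V) :
    SimpleGraph V where
  Adj x y := Xor' (G.Adj x y) (x ≠ y ∧ G.Adj v x ∧ G.Adj v y)
  symm := by
    constructor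
    intro x y h
    have h1 := G.adj_comm x y
    have h2 : (x ≠ y) ↔ (y ≠ x) := ne_comm
    unfold Xor' at *
    unfold Xor at *
    tauto
  loopless := by
    constructor
    intro x h
    rcases h with ⟨h1, -⟩ | ⟨⟨h1, -⟩, -⟩
    · exact G.loopless.irrefl x h1
    · exact h1 rfl

/-- The pivot `piv(G;u,v)`: toggle the adjacency of every pair of distinct
vertices `x, y ∉ {u,v}` such that (up to swapping `x` and `y`) `x` is adjacent
to `u`, `y` is adjacent to `v`, and `x` is not adjacent to `v` or `y` is not
adjacent to `u`. -/
def SimpleGraph.pivot {V : Type*} (G : SimpleGraph V) (u v : V) :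
    SimpleGraph V where
  Adj x y := Xor' (G.Adj x y)
    (x ≠ y ∧ x ≠ u ∧ x ≠ v ∧ y ≠ u ∧ y ≠ v ∧
      ((G.Adj u x ∧ G.Adj v y ∧ (¬ G.Adj v x ∨ ¬ G.Adj u y)) ∨
       (G.Adj u y ∧ G.Adj v x ∧ (¬ G.Adj v y ∨ ¬ G.Adj u x))))
  symm := by
    constructor
    intro x y h
    have psymm : ∀ a b : V,
        (a ≠ b ∧ a ≠ u ∧ a ≠ v ∧ b ≠ u ∧ b ≠ v ∧
          ((G.Adj u a ∧ G.Adj v b ∧ (¬ G.Adj v a ∨ ¬ G.Adj u b)) ∨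
           (G.Adj u b ∧ G.Adj v a ∧ (¬ G.Adj v b ∨ ¬ G.Adj u a)))) →
        (b ≠ a ∧ b ≠ u ∧ b ≠ v ∧ a ≠ u ∧ a ≠ v ∧
          ((G.Adj u b ∧ G.Adj v a ∧ (¬ G.Adj v b ∨ ¬ G.Adj u a)) ∨
           (G.Adj u a ∧ G.Adj v b ∧ (¬ G.Adj v a ∨ ¬ G.Adj u b)))) := by
      rintro a b ⟨h1, h2, h3, h4, h5, h6⟩
      exact ⟨h1.symm, h4, h5, h2, h3, h6.symm⟩
    unfold Xor' at h ⊢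
    rcases h with ⟨ha, hnp⟩ | ⟨hp, hna⟩
    · exact Or.inl ⟨G.adj_symm ha, fun hp' => hnp (psymm y x hp')⟩
    · exact Or.inr ⟨psymm x y hp, fun ha' => hna (G.adj_symm ha')⟩
  loopless := by
    constructor
    intro x h
    rcases h with ⟨h1, -⟩ | ⟨⟨h1, -⟩, -⟩
    · exact G.loopless.irrefl x h1
    · exact h1 rfl

/-!
Local complementation at `v` keeps the neighbourhood of `v` and replaces the neighbourhood of
each neighbour `w` of `v` by `N(w) Δ N(v)`. Following `N(u)` and `N(v)` through the complements
at `u`, `v`, `u` (all of which keep the edge `uv`) shows that `u` and `v` end up with exchanged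
neighbourhoods outside `{u, v}`, while a pair `a, b` outside `{u, v}` is toggled
`[ua ∧ ub] + [(ua + va) ∧ (ub + vb)] + [va ∧ vb] = [ua ∧ vb] + [va ∧ ub]` times mod 2, exactly as
in the pivot. Hence the transposition of `u` and `v` is an isomorphism.
-/

namespace SimpleGraph

variable {V : Type*} (G : SimpleGraph V) {u v w x y : V}

@[simp]
lemma localComp_adj : (G.localComp v).Adj x y ↔ Xor (G.Adj x y) (x ≠ y ∧ G.Adj v x ∧ G.Adj v y) :=
  Iff.rfl

lemma pivot_adj : (G.pivot u v).Adj x y ↔ Xor (G.Adj x y)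
    (x ≠ y ∧ x ≠ u ∧ x ≠ v ∧ y ≠ u ∧ y ≠ v ∧
      ((G.Adj u x ∧ G.Adj v y ∧ (¬ G.Adj v x ∨ ¬ G.Adj u y)) ∨
       (G.Adj u y ∧ G.Adj v x ∧ (¬ G.Adj v y ∨ ¬ G.Adj u x)))) :=
  Iff.rfl

lemma localComp_adj_self_left : (G.localComp v).Adj v x ↔ G.Adj v x := by
  simp [xor_def]

lemma localComp_adj_self_right : (G.localComp v).Adj x v ↔ G.Adj x v := by
  rw [adj_comm, localComp_adj_self_left, adj_comm]

lemma localComp_adj_of_adj (hvw : G.Adj v w) (hx : w ≠ x) :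
    (G.localComp v).Adj w x ↔ Xor (G.Adj w x) (G.Adj v x) := by
  simp [hvw, hx]

lemma pivot_adj_of_left_mem (hx : x = u ∨ x = v) : (G.pivot u v).Adj x y ↔ G.Adj x y := by
  rcases hx with rfl | rfl <;> simp [pivot_adj, xor_def]

lemma xor_triple_toggle_iff (p a b c d : Prop) :
    Xor (Xor (Xor p (a ∧ b)) (Xor c a ∧ Xor d b)) (c ∧ d) ↔
      Xor p ((a ∧ d ∧ (¬c ∨ ¬b)) ∨ (b ∧ c ∧ (¬d ∨ ¬a))) := by
  grind

section TripleLocalComp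

variable {G} (huv : G.Adj u v)
include huv

lemma localComp_localComp_adj_left (hxu : x ≠ u) (hxv : x ≠ v) :
    ((G.localComp u).localComp v).Adj u x ↔ G.Adj v x := by
  have hvu : (G.localComp u).Adj v u := by rw [localComp_adj_self_right]; exact huv.symm
  rw [localComp_adj_of_adj _ hvu hxu.symm, localComp_adj_self_left,
    localComp_adj_of_adj _ huv hxv.symm]
  grind

lemma tripleLocalComp_adj_left (hxu : x ≠ u) (hxv : x ≠ v) :
    (((G.localComp u).localComp v).localComp u).Adj u x ↔ G.Adj v x := by
  rw [localComp_adj_self_left, localComp_localComp_adj_left huv hxu hxv]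

lemma tripleLocalComp_adj_right (hxu : x ≠ u) (hxv : x ≠ v) :
    (((G.localComp u).localComp v).localComp u).Adj v x ↔ G.Adj u x := by
  have huv₂ : ((G.localComp u).localComp v).Adj u v := by
    rw [localComp_adj_self_right, localComp_adj_self_left]; exact huv
  rw [localComp_adj_of_adj _ huv₂ hxv.symm, localComp_localComp_adj_left huv hxu hxv,
    localComp_adj_self_left, localComp_adj_of_adj _ huv hxv.symm]
  grind

lemma tripleLocalComp_adj_self : (((G.localComp u).localComp v).localComp u).Adj u v := by
  rw [localComp_adj_self_left, localComp_adj_self_right, localComp_adj_self_left]; exact huv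

lemma tripleLocalComp_adj_iff_pivot_adj {a b : V} (hab : a ≠ b) (hau : a ≠ u) (hav : a ≠ v)
    (hbu : b ≠ u) (hbv : b ≠ v) :
    (((G.localComp u).localComp v).localComp u).Adj a b ↔ (G.pivot u v).Adj a b := by
  rw [localComp_adj, localComp_localComp_adj_left huv hau hav,
    localComp_localComp_adj_left huv hbu hbv, localComp_adj, localComp_adj_of_adj _ huv hav.symm,
    localComp_adj_of_adj _ huv hbv.symm, localComp_adj, pivot_adj]
  simpa only [ne_eq, hab, hau, hav, hbu, hbv, not_false_eq_true, true_and] using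
    xor_triple_toggle_iff _ _ _ _ _

lemma tripleLocalComp_adj_left_swap [DecidableEq V] (x : V) :
    (((G.localComp u).localComp v).localComp u).Adj u (Equiv.swap u v x) ↔ G.Adj v x := by
  by_cases hxu : x = u
  · rw [hxu, Equiv.swap_apply_left]
    exact iff_of_true (tripleLocalComp_adj_self huv) huv.symm
  by_cases hxv : x = v
  · rw [hxv, Equiv.swap_apply_right]
    exact iff_of_false (SimpleGraph.irrefl _) (SimpleGraph.irrefl _)
  rw [Equiv.swap_apply_of_ne_of_ne hxu hxv, tripleLocalComp_adj_left huv hxu hxv]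

lemma tripleLocalComp_adj_right_swap [DecidableEq V] (x : V) :
    (((G.localComp u).localComp v).localComp u).Adj v (Equiv.swap u v x) ↔ G.Adj u x := by
  by_cases hxu : x = u
  · rw [hxu, Equiv.swap_apply_left]
    exact iff_of_false (SimpleGraph.irrefl _) (SimpleGraph.irrefl _)
  by_cases hxv : x = v
  · rw [hxv, Equiv.swap_apply_right]
    exact iff_of_true (tripleLocalComp_adj_self huv).symm huv
  rw [Equiv.swap_apply_of_ne_of_ne hxu hxv, tripleLocalComp_adj_right huv hxu hxv]

lemma tripleLocalComp_adj_swap_of_left_mem [DecidableEq V] {a : V} (ha : a = u ∨ a = v) (b : V) :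
    (((G.localComp u).localComp v).localComp u).Adj (Equiv.swap u v a) (Equiv.swap u v b) ↔
      (G.pivot u v).Adj a b := by
  rw [pivot_adj_of_left_mem _ ha]
  rcases ha with rfl | rfl
  · rw [Equiv.swap_apply_left, tripleLocalComp_adj_right_swap huv]
  · rw [Equiv.swap_apply_right, tripleLocalComp_adj_left_swap huv]

lemma tripleLocalComp_adj_swap [DecidableEq V] (a b : V) :
    (((G.localComp u).localComp v).localComp u).Adj (Equiv.swap u v a) (Equiv.swap u v b) ↔
      (G.pivot u v).Adj a b := by
  by_cases ha : a = u ∨ a = v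
  · exact tripleLocalComp_adj_swap_of_left_mem huv ha b
  by_cases hb : b = u ∨ b = v
  · rw [adj_comm, (G.pivot u v).adj_comm]
    exact tripleLocalComp_adj_swap_of_left_mem huv hb a
  obtain rfl | hab := eq_or_ne a b
  · exact iff_of_false (SimpleGraph.irrefl _) (SimpleGraph.irrefl _)
  push Not at ha hb
  rw [Equiv.swap_apply_of_ne_of_ne ha.1 ha.2, Equiv.swap_apply_of_ne_of_ne hb.1 hb.2]
  exact tripleLocalComp_adj_iff_pivot_adj huv hab ha.1 ha.2 hb.1 hb.2

end TripleLocalComp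

end SimpleGraph

theorem pivot_iso_triple_localComp_general {V : Type*}
    (G : SimpleGraph V) (u v : V) (huv : G.Adj u v) :
    Nonempty (G.pivot u v ≃g ((G.localComp u).localComp v).localComp u) := by
  classical
  exact ⟨⟨Equiv.swap u v, G.tripleLocalComp_adj_swap huv _ _⟩⟩

/-- For a finite simple graph `G` and adjacent vertices
`u`, `v`, the pivot `piv(G;u,v)` is isomorphic, on the same vertex set, to the
triple local complement `LC(LC(LC(G;u);v);u)`. -/
theorem pivot_iso_triple_localComp {V : Type*} [Fintype V]
    (G : SimpleGraph V) (u v : V) (huv : G.Adj u v) :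
    Nonempty (G.pivot u v ≃g ((G.localComp u).localComp v).localComp u) :=
  pivot_iso_triple_localComp_general G u v huv
end

section
/- For every symmetric n×n matrix A over ℤ/2ℤ there exists a symmetric n×n matrix Ã over ℤ/2ℤ with det Ã = 1 such that Ã agrees with A in all off-diagonal entries (Ã_{ij} = A_{ij} for all i ≠ j). -/
open Matrix

theorem Matrix.det_add_single_self {n R : Type*} [Fintype n] [DecidableEq n] [CommRing R]
    (M : Matrix n n R) (i : n) (c : R) :
    (M + single i i c).det = M.det + c * M.adjugate i i := by
  have hrow : M + single i i c = M.updateRow i (M i + c • Pi.single i 1) := by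
    ext k l
    rcases eq_or_ne k i with rfl | hk
    · simp [single_apply, Pi.single_apply, eq_comm]
    · simp [hk, hk.symm]
  rw [hrow, det_updateRow_add, det_updateRow_smul, updateRow_eq_self, adjugate_apply]

/- The determinant is affine in the first diagonal entry, with slope the complementary principal
minor; making that minor `1` by induction, the first diagonal entry can then be solved for. -/
theorem Matrix.exists_det_add_diagonal_eq_one {R : Type*} [CommRing R] :
    ∀ {n : ℕ} (A : Matrix (Fin n) (Fin n) R), ∃ d : Fin n → R, (A + diagonal d).det = 1
  | 0, _ => ⟨0, det_fin_zero⟩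
  | _ + 1, A => by
    obtain ⟨d, hd⟩ := exists_det_add_diagonal_eq_one (A.submatrix Fin.succ Fin.succ)
    set M := A + diagonal (Fin.cons 0 d)
    have hminor : M.adjugate 0 0 = 1 := by
      have : M.submatrix Fin.succ Fin.succ = A.submatrix Fin.succ Fin.succ + diagonal d := by
        ext i j
        by_cases hij : i = j <;> simp [M, hij]
      rw [adjugate_fin_succ_eq_det_submatrix, Fin.succAbove_zero, this, hd]
      simp
    refine ⟨Fin.cons (1 - M.det) d, ?_⟩
    have hsplit : A + diagonal (Fin.cons (1 - M.det) d) = M + single 0 0 (1 - M.det) := by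
      ext i j
      cases i using Fin.cases <;> cases j using Fin.cases <;>
        simp [M, diagonal_apply, Fin.succ_ne_zero, (Fin.succ_ne_zero _).symm]
    rw [hsplit, det_add_single_self, hminor]
    ring

/-- For every symmetric `n × n` matrix `A` over `ℤ/2ℤ` there
is a symmetric matrix `Ã` over `ℤ/2ℤ` with `det Ã = 1` which coincides with
`A` in all off-diagonal entries. -/
theorem exists_symm_det_one_eq_off_diagonal (n : ℕ)
    (A : Matrix (Fin n) (Fin n) (ZMod 2)) (hA : A.IsSymm) :
    ∃ B : Matrix (Fin n) (Fin n) (ZMod 2),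
      B.IsSymm ∧ B.det = 1 ∧ ∀ i j, i ≠ j → B i j = A i j := by
  obtain ⟨d, hd⟩ := exists_det_add_diagonal_eq_one A
  refine ⟨A + diagonal d, hA.add (isSymm_diagonal d), hd, fun i j hij => ?_⟩
  simp [diagonal_apply_ne _ hij]
end

section
/- Let n ≥ 1 and let m be a fixed-point-free involution of ℤ/2nℤ, regarded as a chord diagram whose n chords are the orbits {i, m(i)} (all chords framed 0). Let A be the n×n matrix over ℤ/2ℤ indexed by the chords, with zero diagonal and with A_{cd} = 1 for c ≠ d iff the chords c and d are linked, i.e. exactly one endpoint of d lies in the cyclic interval strictly between the two endpoints of c. Then the number of orbits (cycles, counting fixed points) of the permutation i ↦ m(i+1) of ℤ/2nℤ equals corank_{ℤ/2ℤ}(A) + 1. (This is the all-framings-0 special case of Soboleva's theorem: the number of connected components of the 1-manifold obtained by surgery on a framed chord diagram equals corank A(G) + 1, where G is the intersection graph.) -/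
/-- `x` lies strictly between `a` and `b` in the cyclic order of `ZMod N`
(going from `a` in the positive direction towards `b`). -/
def cyclicBtw {N : ℕ} (a x b : ZMod N) : Prop :=
  0 < (x - a).val ∧ (x - a).val < (b - a).val

instance {N : ℕ} (a x b : ZMod N) : Decidable (cyclicBtw a x b) := by
  unfold cyclicBtw; infer_instance

/-- The chords through `i` and through `j` (of the chord diagram given by the
fixed-point-free involution `m`) are linked: exactly one endpoint of the chord
`{j, m j}` lies in the cyclic interval strictly between `i` and `m i`. -/
def ChordLinked {N : ℕ} (m : Equiv.Perm (ZMod N)) (i j : ZMod N) : Prop :=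
  Xor' (cyclicBtw i j (m i)) (cyclicBtw i (m j) (m i))

instance {N : ℕ} (m : Equiv.Perm (ZMod N)) (i j : ZMod N) :
    Decidable (ChordLinked m i j) := by
  unfold ChordLinked Xor'; infer_instance

/-- The chords of the diagram, each represented by its endpoint of smaller value. -/
def ChordIdx {N : ℕ} (m : Equiv.Perm (ZMod N)) : Type :=
  {i : ZMod N // i.val < (m i).val}

instance {N : ℕ} [NeZero N] (m : Equiv.Perm (ZMod N)) : Fintype (ChordIdx m) := by
  unfold ChordIdx; infer_instance

instance {N : ℕ} [NeZero N] (m : Equiv.Perm (ZMod N)) : DecidableEq (ChordIdx m) := by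
  unfold ChordIdx; infer_instance

/-- The adjacency matrix over `ℤ/2ℤ` of the intersection graph of the chord
diagram given by `m`: zero diagonal, and `1` at `(c,d)`, `c ≠ d`, iff the
chords `c` and `d` are linked. -/
def interMat {N : ℕ} [NeZero N] (m : Equiv.Perm (ZMod N)) :
    Matrix (ChordIdx m) (ChordIdx m) (ZMod 2) :=
  fun c d => if c = d then 0 else if ChordLinked m c.1 d.1 then 1 else 0

/-- The number of orbits (cycles, counting fixed points) of a permutation of a
finite type. -/
def numCycles {α : Type*} [Fintype α] [DecidableEq α] (σ : Equiv.Perm α) : ℕ :=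
  σ.cycleType.card + (Fintype.card α - σ.support.card)

/-!
Over `𝔽₂`, the number of cycles of `σ = m ∘ (· + 1)` is the dimension of the space of
`σ`-invariant functions on `ℤ/2nℤ`, and precomposition with `m` identifies that space with the
kernel of `B f = f (· + 1) + f ∘ m`. Let `D f = f (· + 1) + f`, let `φ` add the values of a
function at the two endpoints of each chord, let `ψ` pull functions on chords back to points, and
let `J` send the chord `c = {a < b}` to the indicator of the arc `(a, b]`. Then `φ B = φ D`,
`D J = ψ` and `B J = ψ A`, the last because at an endpoint of a chord `d ≠ c` the value of
`B 1_(a,b]` counts mod 2 the endpoints of `d` inside `(a, b)`. As `ker (φ D) = range J + constants`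
and both `B` and `D` kill constants, `rank f = rank (φ f) + dim f (ker (φ f))` gives
`rank B = rank (φ D) + rank A` and `rank D = rank (φ D) + n`; with `rank D = 2n - 1` the corank of
`B` is `n + 1 - rank A`.
-/

open Module

namespace Equiv.Perm

variable {α : Type*}

def invariantFunctions (K : Type*) [Field K] (σ : Perm α) : Submodule K (α → K) where
  carrier := {f | f ∘ σ = f}
  add_mem' {f g} (hf : f ∘ σ = f) (hg : g ∘ σ = g) := by
    change (f + g) ∘ σ = f + g
    rw [Pi.add_comp, hf, hg]
  zero_mem' := rfl
  smul_mem' c f (hf : f ∘ σ = f) := by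
    change (c • f) ∘ σ = c • f
    rw [Pi.smul_comp, hf]

theorem mem_invariantFunctions {K : Type*} [Field K] {σ : Perm α} {f : α → K} :
    f ∈ invariantFunctions K σ ↔ f ∘ σ = f :=
  Iff.rfl

variable [Fintype α] [DecidableEq α]

def orbitLabel (σ : Perm α) (x : α) : σ.cycleFactorsFinset ⊕ Function.fixedPoints σ :=
  if hx : x ∈ Function.fixedPoints σ then .inr ⟨x, hx⟩
  else .inl ⟨σ.cycleOf x, cycleOf_mem_cycleFactorsFinset_iff.2 (mem_support.2 hx)⟩

theorem orbitLabel_surjective (σ : Perm α) : Function.Surjective (orbitLabel σ) := by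
  rintro (⟨c, hc⟩ | ⟨x, hx⟩)
  · obtain ⟨x, hxc⟩ := (mem_cycleFactorsFinset_iff.1 hc).1.nonempty_support
    have hx : x ∉ Function.fixedPoints σ :=
      mem_support.1 (mem_cycleFactorsFinset_support_le hc hxc)
    refine ⟨x, ?_⟩
    simp only [orbitLabel, dif_neg hx, cycle_is_cycleOf hxc hc]
  · exact ⟨x, dif_pos hx⟩

theorem orbitLabel_eq_iff (σ : Perm α) {x y : α} :
    orbitLabel σ x = orbitLabel σ y ↔ σ.SameCycle x y := by
  unfold orbitLabel
  by_cases hx : x ∈ Function.fixedPoints σ <;> by_cases hy : y ∈ Function.fixedPoints σ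
  · rw [dif_pos hx, dif_pos hy, Sum.inr.injEq, Subtype.mk.injEq]
    exact ⟨fun h => h ▸ .refl σ x, fun h => h.eq_of_left hx⟩
  · rw [dif_pos hx, dif_neg hy]
    exact iff_of_false Sum.inr_ne_inl fun h => hy (h.apply_eq_self_iff.1 hx)
  · rw [dif_neg hx, dif_pos hy]
    exact iff_of_false Sum.inl_ne_inr fun h => hx (h.apply_eq_self_iff.2 hy)
  · rw [dif_neg hx, dif_neg hy, Sum.inl.injEq, Subtype.mk.injEq]
    exact (sameCycle_iff_cycleOf_eq_of_mem_support (mem_support.2 hx) (mem_support.2 hy)).symm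

theorem card_cycleFactorsFinset_sum_fixedPoints (σ : Perm α) :
    Fintype.card (σ.cycleFactorsFinset ⊕ Function.fixedPoints σ) = numCycles σ := by
  rw [numCycles, Fintype.card_sum, Fintype.card_coe, card_fixedPoints, sum_cycleType,
    cycleType_def, Multiset.card_map]
  rfl

theorem invariantFunctions_eq_range_funLeft (K : Type*) [Field K] (σ : Perm α) :
    invariantFunctions K σ = LinearMap.range (LinearMap.funLeft K K (orbitLabel σ)) := by
  ext f
  constructor
  · intro (hf : f ∘ σ = f)
    refine ⟨f ∘ Function.surjInv (orbitLabel_surjective σ), funext fun x => ?_⟩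
    set y := Function.surjInv (orbitLabel_surjective σ) (orbitLabel σ x)
    obtain ⟨k, hk⟩ := ((orbitLabel_eq_iff σ).1
      (Function.surjInv_eq (orbitLabel_surjective σ) (orbitLabel σ x))).exists_nat_pow_eq
    change f y = f x
    rw [← hk, coe_pow]
    exact (congrFun (Function.iterate_invariant hf k) y).symm
  · rintro ⟨g, rfl⟩
    funext x
    exact congrArg g ((orbitLabel_eq_iff σ).2 (SameCycle.refl σ x).apply_left)

theorem finrank_invariantFunctions (K : Type*) [Field K] (σ : Perm α) :
    finrank K (invariantFunctions K σ) = numCycles σ := by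
  rw [invariantFunctions_eq_range_funLeft, LinearMap.finrank_range_of_inj
    (LinearMap.funLeft_injective_of_surjective _ _ _ (orbitLabel_surjective σ)),
    Module.finrank_fintype_fun_eq_card, card_cycleFactorsFinset_sum_fixedPoints]

end Equiv.Perm

section LinearAlgebra

variable {K U V W : Type*} [Field K] [AddCommGroup U] [Module K U] [AddCommGroup V] [Module K V]
  [AddCommGroup W] [Module K W]

theorem LinearMap.finrank_range_eq_finrank_range_comp_add [FiniteDimensional K U]
    (f : U →ₗ[K] V) (g : V →ₗ[K] W) :
    finrank K (range f) =
      finrank K (range (g ∘ₗ f)) + finrank K ((ker (g ∘ₗ f)).map f) := by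
  have hf := finrank_range_add_finrank_ker f
  have hgf := finrank_range_add_finrank_ker (g ∘ₗ f)
  have hres := finrank_range_add_finrank_ker (f.domRestrict (ker (g ∘ₗ f)))
  rw [range_domRestrict, ker_domRestrict,
    (Submodule.comapSubtypeEquivOfLe (ker_le_ker_comp f g)).finrank_eq] at hres
  omega

theorem LinearMap.finrank_range_comp_of_injective (f : U →ₗ[K] V) {g : V →ₗ[K] W}
    (hg : Function.Injective g) : finrank K (range (g ∘ₗ f)) = finrank K (range f) := by
  rw [range_comp]
  exact (Submodule.equivMapOfInjective g hg _).finrank_eq.symm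

theorem Matrix.finrank_range_vecMulLinear {m n : Type*} [Fintype m] [Fintype n] (M : Matrix m n K) :
    finrank K (LinearMap.range M.vecMulLinear) = M.rank := by
  rw [range_vecMulLinear, rank_eq_finrank_span_row]

end LinearAlgebra

namespace ZMod

variable {N : ℕ} [NeZero N]

theorem val_add_one_cases (i : ZMod N) :
    (i + 1).val = i.val + 1 ∨ (i + 1).val = 0 ∧ i.val + 1 = N := by
  have hcast : ((i.val + 1 : ℕ) : ZMod N) = i + 1 := by push_cast [natCast_zmod_val]; rfl
  rcases Nat.lt_or_ge (i.val + 1) N with h | h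
  · left
    rw [← hcast, val_natCast_of_lt h]
  · have h' : i.val + 1 = N := le_antisymm (val_lt i) h
    right
    rw [← hcast, h', natCast_self, val_zero]
    exact ⟨rfl, rfl⟩

theorem val_sub_add_val_cases (x a : ZMod N) :
    (x - a).val + a.val = x.val ∨ (x - a).val + a.val = x.val + N := by
  rcases Nat.lt_or_ge ((x - a).val + a.val) N with h | h
  · left
    rw [← val_add_of_lt h, sub_add_cancel]
  · right
    rw [val_add_val_of_le h, sub_add_cancel]

end ZMod

theorem cyclicBtw_iff {N : ℕ} [NeZero N] {a b : ZMod N} (hab : a.val < b.val) (x : ZMod N) :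
    cyclicBtw a x b ↔ a.val < x.val ∧ x.val < b.val := by
  have := ZMod.val_lt (x - a)
  have := ZMod.val_lt (b - a)
  have := ZMod.val_lt b
  rcases ZMod.val_sub_add_val_cases x a with hx | hx <;>
    rcases ZMod.val_sub_add_val_cases b a with hb | hb <;>
    (unfold cyclicBtw; omega)

namespace ChordDiagram

variable {N : ℕ} (m : Equiv.Perm (ZMod N))

section Operators

variable (N) in
def cyclicDiff : (ZMod N → ZMod 2) →ₗ[ZMod 2] (ZMod N → ZMod 2) :=
  LinearMap.funLeft _ _ (· + 1) + LinearMap.id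

def surgeryDiff : (ZMod N → ZMod 2) →ₗ[ZMod 2] (ZMod N → ZMod 2) :=
  LinearMap.funLeft _ _ (· + 1) + LinearMap.funLeft _ _ m

def endpointSum : (ZMod N → ZMod 2) →ₗ[ZMod 2] (ChordIdx m → ZMod 2) :=
  LinearMap.funLeft _ _ (fun c : ChordIdx m => c.1) +
    LinearMap.funLeft _ _ (fun c : ChordIdx m => m c.1)

def arc (a b : ZMod N) : ZMod N → ZMod 2 :=
  fun i => if a.val < i.val ∧ i.val ≤ b.val then 1 else 0

def arcMatrix : Matrix (ChordIdx m) (ZMod N) (ZMod 2) := fun c => arc c.1 (m c.1)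

theorem cyclicDiff_apply (f : ZMod N → ZMod 2) (i : ZMod N) :
    cyclicDiff N f i = f (i + 1) + f i :=
  rfl

theorem surgeryDiff_apply (f : ZMod N → ZMod 2) (i : ZMod N) :
    surgeryDiff m f i = f (i + 1) + f (m i) :=
  rfl

theorem endpointSum_apply (f : ZMod N → ZMod 2) (c : ChordIdx m) :
    endpointSum m f c = f c.1 + f (m c.1) :=
  rfl

theorem endpointSum_comp_surgeryDiff (hinv : ∀ i, m (m i) = i) :
    endpointSum m ∘ₗ surgeryDiff m = endpointSum m ∘ₗ cyclicDiff N := by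
  refine LinearMap.ext fun f => funext fun c => ?_
  simp only [LinearMap.comp_apply, endpointSum_apply, surgeryDiff_apply, cyclicDiff_apply, hinv]
  ring

theorem chordLinked_apply_right (hinv : ∀ i, m (m i) = i) (i j : ZMod N) :
    ChordLinked m i (m j) ↔ ChordLinked m i j := by
  unfold ChordLinked
  rw [hinv]
  exact (xor_comm _ _).to_iff

theorem ker_surgeryDiff (hinv : ∀ i, m (m i) = i) :
    LinearMap.ker (surgeryDiff m) = (Equiv.Perm.invariantFunctions (ZMod 2)
      ((Equiv.addRight 1).trans m)).comap (LinearMap.funLeft _ _ m) := by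
  ext f
  rw [LinearMap.mem_ker, Submodule.mem_comap, Equiv.Perm.mem_invariantFunctions, funext_iff,
    funext_iff]
  refine forall_congr' fun i => ?_
  simp only [surgeryDiff_apply, LinearMap.funLeft_apply, Function.comp_apply, Equiv.trans_apply,
    Equiv.coe_addRight, hinv, Pi.zero_apply, CharTwo.add_eq_zero]

end Operators

variable [NeZero N]

theorem arc_add_one (a b i : ZMod N) :
    arc a b (i + 1) = if a.val ≤ i.val ∧ i.val < b.val then 1 else 0 := by
  have := ZMod.val_lt b
  unfold arc
  rcases ZMod.val_add_one_cases i with h | ⟨h, h'⟩ <;> rw [h] <;> split_ifs <;>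
    first | rfl | (exfalso; omega)

theorem cyclicDiff_arc {a b : ZMod N} (hab : a.val ≤ b.val) :
    cyclicDiff N (arc a b) = Pi.single a 1 + Pi.single b 1 := by
  funext i
  simp only [cyclicDiff_apply, arc_add_one, Pi.add_apply, Pi.single_apply,
    ← (ZMod.val_injective N).eq_iff]
  unfold arc
  split_ifs <;> first | rfl | decide | (exfalso; omega)

theorem ker_cyclicDiff : LinearMap.ker (cyclicDiff N) = Submodule.span (ZMod 2) {1} := by
  ext f
  rw [LinearMap.mem_ker, Submodule.mem_span_singleton]
  constructor
  · intro hf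
    have hstep (i : ZMod N) : f (i + 1) = f i := CharTwo.add_eq_zero.1 (congrFun hf i)
    have hconst (k : ℕ) : f k = f 0 := by
      induction k with
      | zero => simp
      | succ k ih => rw [Nat.cast_succ, hstep, ih]
    refine ⟨f 0, funext fun i => ?_⟩
    rw [Pi.smul_apply, Pi.one_apply, smul_eq_mul, mul_one, ← hconst, ZMod.natCast_zmod_val]
  · rintro ⟨a, rfl⟩
    funext i
    exact CharTwo.add_self_eq_zero _

theorem finrank_ker_cyclicDiff : finrank (ZMod 2) (LinearMap.ker (cyclicDiff N)) = 1 := by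
  rw [ker_cyclicDiff]
  exact finrank_span_singleton one_ne_zero

theorem ker_cyclicDiff_le_ker_surgeryDiff :
    LinearMap.ker (cyclicDiff N) ≤ LinearMap.ker (surgeryDiff m) := by
  rw [ker_cyclicDiff, Submodule.span_singleton_le_iff_mem, LinearMap.mem_ker]
  funext i
  exact CharTwo.add_self_eq_zero _

theorem finrank_ker_surgeryDiff (hinv : ∀ i, m (m i) = i) :
    finrank (ZMod 2) (LinearMap.ker (surgeryDiff m)) = numCycles ((Equiv.addRight 1).trans m) := by
  rw [ker_surgeryDiff m hinv, ← Equiv.Perm.finrank_invariantFunctions (ZMod 2)]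
  exact (Submodule.comap_equiv_eq_map_symm (LinearEquiv.funCongrLeft (ZMod 2) (ZMod 2) m) _ ▸
    LinearEquiv.finrank_map_eq _ _)

theorem ite_chordLinked {a : ZMod N} (ha : a.val < (m a).val) (i : ZMod N) :
    (if ChordLinked m a i then (1 : ZMod 2) else 0) =
      (if a.val < i.val ∧ i.val < (m a).val then 1 else 0) +
        (if a.val < (m i).val ∧ (m i).val < (m a).val then 1 else 0) := by
  have hlinked : ChordLinked m a i ↔
      Xor (a.val < i.val ∧ i.val < (m a).val) (a.val < (m i).val ∧ (m i).val < (m a).val) := by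
    unfold ChordLinked
    rw [cyclicBtw_iff ha, cyclicBtw_iff ha]
    rfl
  rw [if_congr hlinked rfl rfl]
  split_ifs <;> simp_all
  decide

variable (hinv : ∀ i, m (m i) = i) (hfpf : ∀ i, m i ≠ i)

def chordOf (i : ZMod N) : ChordIdx m :=
  if h : i.val < (m i).val then ⟨i, h⟩
  else ⟨m i, by
    have hmm : (m (m i)).val = i.val := congrArg ZMod.val (hinv i)
    have hne : (m i).val ≠ i.val := fun h' => hfpf i (ZMod.val_injective N h')
    omega⟩

def chordPullback : (ChordIdx m → ZMod 2) →ₗ[ZMod 2] (ZMod N → ZMod 2) :=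
  LinearMap.funLeft _ _ (chordOf m hinv hfpf)

theorem val_chordOf (i : ZMod N) :
    (chordOf m hinv hfpf i).1 = if i.val < (m i).val then i else m i := by
  unfold chordOf
  by_cases h : i.val < (m i).val
  · rw [if_pos h]
    exact congrArg Subtype.val (dif_pos h)
  · rw [if_neg h]
    exact congrArg Subtype.val (dif_neg h)

include hinv

theorem chordOf_eq_iff (i : ZMod N) (c : ChordIdx m) :
    chordOf m hinv hfpf i = c ↔ i = c.1 ∨ i = m c.1 := by
  have hc := c.2
  have hval : chordOf m hinv hfpf i = c ↔ (chordOf m hinv hfpf i).1 = c.1 :=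
    ⟨congrArg Subtype.val, Subtype.ext⟩
  rw [hval, val_chordOf]
  split_ifs with h
  · refine ⟨.inl, ?_⟩
    rintro (rfl | rfl)
    · rfl
    · rw [hinv] at h
      omega
  · constructor
    · intro h'
      exact .inr (by rw [← h', hinv])
    · rintro (rfl | rfl)
      · exact absurd hc h
      · exact hinv _

theorem chordOf_val (c : ChordIdx m) : chordOf m hinv hfpf c.1 = c :=
  (chordOf_eq_iff m hinv hfpf _ c).2 (.inl rfl)

theorem chordOf_apply_val (c : ChordIdx m) : chordOf m hinv hfpf (m c.1) = c :=
  (chordOf_eq_iff m hinv hfpf _ c).2 (.inr rfl)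

theorem interMat_apply_chordOf (c : ChordIdx m) (i : ZMod N) :
    interMat m c (chordOf m hinv hfpf i) =
      if i = c.1 ∨ i = m c.1 then 0
      else (if c.1.val < i.val ∧ i.val < (m c.1).val then 1 else 0) +
        (if c.1.val < (m i).val ∧ (m i).val < (m c.1).val then 1 else 0) := by
  have hlinked : ChordLinked m c.1 (chordOf m hinv hfpf i).1 ↔ ChordLinked m c.1 i := by
    rw [val_chordOf]
    split_ifs
    · rfl
    · exact chordLinked_apply_right m hinv _ _
  have hend : c = chordOf m hinv hfpf i ↔ i = c.1 ∨ i = m c.1 := by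
    rw [eq_comm, chordOf_eq_iff]
  simp only [interMat, hend, hlinked]
  by_cases h : i = c.1 ∨ i = m c.1
  · rw [if_pos h, if_pos h]
  · rw [if_neg h, if_neg h]
    exact ite_chordLinked m c.2 i

theorem endpointSum_comp_chordPullback : endpointSum m ∘ₗ chordPullback m hinv hfpf = 0 := by
  refine LinearMap.ext fun g => funext fun c => ?_
  simp only [LinearMap.comp_apply, endpointSum_apply, chordPullback, LinearMap.funLeft_apply,
    chordOf_val, chordOf_apply_val, LinearMap.zero_apply, Pi.zero_apply]
  exact CharTwo.add_self_eq_zero _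

theorem ker_endpointSum_le :
    LinearMap.ker (endpointSum m) ≤ LinearMap.range (chordPullback m hinv hfpf) := by
  intro f hf
  have hend (c : ChordIdx m) : f c.1 = f (m c.1) := CharTwo.add_eq_zero.1 (congrFun hf c)
  refine ⟨fun c => f c.1, funext fun i => ?_⟩
  simp only [chordPullback, LinearMap.funLeft_apply, val_chordOf]
  split_ifs with h
  · rfl
  · have := hend (chordOf m hinv hfpf i)
    rwa [val_chordOf, if_neg h, hinv] at this

theorem cyclicDiff_comp_arcMatrix :
    cyclicDiff N ∘ₗ (arcMatrix m).vecMulLinear = chordPullback m hinv hfpf := by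
  refine LinearMap.pi_ext fun c x => funext fun i => ?_
  have hc : c.1 ≠ m c.1 := fun h => hfpf _ h.symm
  rw [LinearMap.comp_apply, Matrix.vecMulLinear_apply, Matrix.single_vecMul, map_smul]
  simp only [Matrix.row, arcMatrix, cyclicDiff_arc c.2.le, chordPullback, LinearMap.funLeft_apply,
    Pi.smul_apply, Pi.add_apply, Pi.single_apply, chordOf_eq_iff, smul_eq_mul]
  by_cases h1 : i = c.1 <;> by_cases h2 : i = m c.1 <;> simp_all

theorem surgeryDiff_arc (c : ChordIdx m) (i : ZMod N) :
    surgeryDiff m (arc c.1 (m c.1)) i = interMat m c (chordOf m hinv hfpf i) := by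
  have hc := c.2
  have := ZMod.val_lt (m c.1)
  rw [surgeryDiff_apply, arc_add_one, interMat_apply_chordOf]
  unfold arc
  by_cases h : i = c.1 ∨ i = m c.1
  · rw [if_pos h]
    rcases h with rfl | rfl
    · rw [if_pos ⟨le_rfl, hc⟩, if_pos ⟨hc, le_rfl⟩]
      decide
    · rw [hinv, if_neg (by omega), if_neg (by omega)]
      rfl
  · rw [if_neg h]
    have := ZMod.val_lt i
    have hne : i ≠ c.1 ∧ i ≠ m c.1 ∧ m i ≠ c.1 ∧ m i ≠ m c.1 :=
      ⟨fun e => h (.inl e), fun e => h (.inr e), fun e => h (.inr (by rw [← e, hinv])),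
        fun e => h (.inl (m.injective e))⟩
    simp only [← (ZMod.val_injective N).ne_iff] at hne
    congr 1 <;> split_ifs <;> first | rfl | (exfalso; omega)

theorem surgeryDiff_comp_arcMatrix :
    surgeryDiff m ∘ₗ (arcMatrix m).vecMulLinear =
      chordPullback m hinv hfpf ∘ₗ (interMat m).vecMulLinear := by
  refine LinearMap.pi_ext fun c x => funext fun i => ?_
  simp only [LinearMap.comp_apply, Matrix.vecMulLinear_apply, Matrix.single_vecMul, map_smul,
    Pi.smul_apply, chordPullback, LinearMap.funLeft_apply, Matrix.row, arcMatrix]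
  rw [surgeryDiff_arc m hinv hfpf]

include hfpf in
theorem ker_endpointSum_comp_cyclicDiff :
    LinearMap.ker (endpointSum m ∘ₗ cyclicDiff N) =
      LinearMap.range (arcMatrix m).vecMulLinear ⊔ LinearMap.ker (cyclicDiff N) := by
  apply le_antisymm
  · intro f hf
    obtain ⟨g, hg⟩ := ker_endpointSum_le m hinv hfpf hf
    rw [← cyclicDiff_comp_arcMatrix m hinv hfpf, LinearMap.comp_apply] at hg
    refine Submodule.mem_sup.2 ⟨_, ⟨g, rfl⟩, f - (arcMatrix m).vecMulLinear g, ?_, by abel⟩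
    rw [LinearMap.mem_ker, map_sub, hg, sub_self]
  · refine sup_le ?_ (LinearMap.ker_le_ker_comp _ _)
    rw [LinearMap.range_le_ker_iff, LinearMap.comp_assoc, cyclicDiff_comp_arcMatrix m hinv hfpf,
      endpointSum_comp_chordPullback]

theorem chordPullback_injective : Function.Injective (chordPullback m hinv hfpf) :=
  LinearMap.funLeft_injective_of_surjective _ _ _ fun c => ⟨c.1, chordOf_val m hinv hfpf c⟩

include hfpf in
theorem finrank_range_surgeryDiff :
    finrank (ZMod 2) (LinearMap.range (surgeryDiff m)) =
      finrank (ZMod 2) (LinearMap.range (endpointSum m ∘ₗ cyclicDiff N)) +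
        (interMat m).rank := by
  have hmap : (LinearMap.ker (endpointSum m ∘ₗ cyclicDiff N)).map (surgeryDiff m) =
      LinearMap.range (chordPullback m hinv hfpf ∘ₗ (interMat m).vecMulLinear) := by
    rw [ker_endpointSum_comp_cyclicDiff m hinv hfpf, Submodule.map_sup, ← LinearMap.range_comp,
      surgeryDiff_comp_arcMatrix m hinv hfpf,
      LinearMap.le_ker_iff_map.1 (ker_cyclicDiff_le_ker_surgeryDiff m), sup_bot_eq]
  rw [(surgeryDiff m).finrank_range_eq_finrank_range_comp_add (endpointSum m),
    endpointSum_comp_surgeryDiff m hinv, hmap,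
    LinearMap.finrank_range_comp_of_injective _ (chordPullback_injective m hinv hfpf),
    Matrix.finrank_range_vecMulLinear]

include hfpf in
theorem finrank_range_cyclicDiff :
    finrank (ZMod 2) (LinearMap.range (cyclicDiff N)) =
      finrank (ZMod 2) (LinearMap.range (endpointSum m ∘ₗ cyclicDiff N)) +
        Fintype.card (ChordIdx m) := by
  have hmap : (LinearMap.ker (endpointSum m ∘ₗ cyclicDiff N)).map (cyclicDiff N) =
      LinearMap.range (chordPullback m hinv hfpf) := by
    rw [ker_endpointSum_comp_cyclicDiff m hinv hfpf, Submodule.map_sup, ← LinearMap.range_comp,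
      cyclicDiff_comp_arcMatrix m hinv hfpf, LinearMap.le_ker_iff_map.1 le_rfl, sup_bot_eq]
  rw [(cyclicDiff N).finrank_range_eq_finrank_range_comp_add (endpointSum m), hmap,
    LinearMap.finrank_range_of_inj (chordPullback_injective m hinv hfpf),
    Module.finrank_fintype_fun_eq_card]

end ChordDiagram

open ChordDiagram in
/-- Soboleva's theorem, all framings `0`. For `n ≥ 1` and a
fixed-point-free involution `m` of `ℤ/2nℤ` regarded as a chord diagram, the
number of cycles of the permutation `i ↦ m (i+1)` equals
`corank A + 1`, where `A` is the `ℤ/2ℤ` adjacency matrix of the intersection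
graph of the chord diagram. -/
theorem soboleva_all_framings_zero (n : ℕ) [NeZero n]
    (m : Equiv.Perm (ZMod (2 * n)))
    (hinv : ∀ i, m (m i) = i) (hfpf : ∀ i, m i ≠ i) :
    numCycles ((Equiv.addRight (1 : ZMod (2 * n))).trans m) =
      (Fintype.card (ChordIdx m) - (interMat m).rank) + 1 := by
  have hcycles := finrank_ker_surgeryDiff m hinv
  have hB := LinearMap.finrank_range_add_finrank_ker (surgeryDiff m)
  have hD := LinearMap.finrank_range_add_finrank_ker (cyclicDiff (2 * n))
  rw [finrank_ker_cyclicDiff] at hD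
  have hBsplit := finrank_range_surgeryDiff m hinv hfpf
  have hDsplit := finrank_range_cyclicDiff m hinv hfpf
  have hrank := (interMat m).rank_le_card_height
  omega
end

section
/- Let G' be obtained from a labeled graph G by adding an isolated vertex with framing 0 and sign α (move Ω1). Then ⟨G'⟩ = −a^{−3}·⟨G⟩ if α = +1 and ⟨G'⟩ = −a^{3}·⟨G⟩ if α = −1. -/
/-- A *labeled graph*: a finite simple graph whose vertices (a finite set of
natural numbers) carry a framing in `ZMod 2` and a sign (`true` = `+`, `false` = `-`). -/
structure LGraph where
  verts : Finset ℕ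
  adj : ℕ → ℕ → Bool
  symm : ∀ x y, adj x y = adj y x
  loopless : ∀ x, adj x x = false
  adj_mem : ∀ x y, adj x y = true → x ∈ verts ∧ y ∈ verts
  fr : ℕ → ZMod 2
  sgn : ℕ → Bool

namespace LGraph

/-- The adjacency matrix over `ZMod 2`, with framings on the diagonal. -/
def A (G : LGraph) : Matrix G.verts G.verts (ZMod 2) :=
  fun u v => if (u : ℕ) = (v : ℕ) then G.fr u else (if G.adj u v then 1 else 0)

/-- `corank (A(G) + E)` over `ZMod 2`. -/
noncomputable def corankAE (G : LGraph) : ℕ :=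
  Fintype.card G.verts - (G.A + 1).rank

/-- `corank A(G)` over `ZMod 2`. -/
noncomputable def corankA (G : LGraph) : ℕ :=
  Fintype.card G.verts - G.A.rank

end LGraph
namespace LGraph

/-- `G'` agrees with `G` (adjacency, framing and sign) away from the set `S`. -/
def sameOutside (G G' : LGraph) (S : Finset ℕ) : Prop :=
  (∀ x y, x ∉ S → y ∉ S → G'.adj x y = G.adj x y) ∧
  (∀ x, x ∉ S → G'.fr x = G.fr x ∧ G'.sgn x = G.sgn x)

/-- Ω1 (addition direction): `G'` is obtained from `G` by adding the isolated
vertex `v` with framing `0` and arbitrary sign. -/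
def Omega1AddAt (G G' : LGraph) (v : ℕ) : Prop :=
  v ∉ G.verts ∧ G'.verts = insert v G.verts ∧ G'.fr v = 0 ∧
    (∀ x, G'.adj v x = false) ∧ sameOutside G G' {v}

/-- Ω2 (addition direction): `G'` is obtained from `G` by adding two vertices `u, v`
with the same adjacencies with all other vertices, opposite signs, either
non-adjacent with framings `0` or adjacent with framings `1`. -/
def Omega2AddAt (G G' : LGraph) (u v : ℕ) : Prop :=
  u ≠ v ∧ u ∉ G.verts ∧ v ∉ G.verts ∧
    G'.verts = insert u (insert v G.verts) ∧
    G'.sgn u = !(G'.sgn v) ∧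
    (∀ x, x ≠ u → x ≠ v → G'.adj u x = G'.adj v x) ∧
    ((G'.adj u v = false ∧ G'.fr u = 0 ∧ G'.fr v = 0) ∨
     (G'.adj u v = true ∧ G'.fr u = 1 ∧ G'.fr v = 1)) ∧
    sameOutside G G' {u, v}

/-- Ω3 (forward direction) at vertices `u, v, w`, all labeled `(0,-)`, with `u`
adjacent exactly to `v` and `w`: the adjacency of `u` with every vertex lying in
exactly one of `N(v)`, `N(w)` is toggled and the signs of `v`,`w` become `+`. -/
def Omega3FwdAt (G G' : LGraph) (u v w : ℕ) : Prop :=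
  u ≠ v ∧ u ≠ w ∧ v ≠ w ∧ u ∈ G.verts ∧ v ∈ G.verts ∧ w ∈ G.verts ∧
    G.fr u = 0 ∧ G.fr v = 0 ∧ G.fr w = 0 ∧
    G.sgn u = false ∧ G.sgn v = false ∧ G.sgn w = false ∧
    (∀ x, G.adj u x = true ↔ (x = v ∨ x = w)) ∧
    G'.verts = G.verts ∧
    (∀ x, G'.adj u x = xor (xor (G.adj v x) (G.adj w x)) (G.adj u x)) ∧
    (∀ x y, x ≠ u → y ≠ u → G'.adj x y = G.adj x y) ∧
    G'.fr u = 0 ∧ G'.sgn u = false ∧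
    G'.fr v = 0 ∧ G'.sgn v = true ∧ G'.fr w = 0 ∧ G'.sgn w = true ∧
    (∀ x, x ≠ u → x ≠ v → x ≠ w → (G'.fr x = G.fr x ∧ G'.sgn x = G.sgn x))

/-- The (one-sided) pivot toggling condition at `u, v` for the pair `x, y`:
`x` is adjacent to `u`, `y` is adjacent to `v`, and `x` is not adjacent to `v`
or `y` is not adjacent to `u`. -/
def pivCond (G : LGraph) (u v x y : ℕ) : Prop :=
  G.adj u x = true ∧ G.adj v y = true ∧ (G.adj v x = false ∨ G.adj u y = false)

instance pivCond.instDecidable (G : LGraph) (u v x y : ℕ) :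
    Decidable (pivCond G u v x y) := by
  unfold pivCond; infer_instance

/-- Ω4 at adjacent vertices `u, v` labeled `(0,α)`, `(0,β)`: `G'` is the pivot
`piv(G;u,v)` with the sign of `u` set to `-β` and the sign of `v` set to `-α`. -/
def Omega4At (G G' : LGraph) (u v : ℕ) : Prop :=
  u ≠ v ∧ G.adj u v = true ∧ G.fr u = 0 ∧ G.fr v = 0 ∧
    G'.verts = G.verts ∧
    (∀ x y, G'.adj x y =
      (if x ≠ y ∧ x ∉ ({u, v} : Finset ℕ) ∧ y ∉ ({u, v} : Finset ℕ) ∧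
          (pivCond G u v x y ∨ pivCond G u v y x)
       then !(G.adj x y) else G.adj x y)) ∧
    G'.fr u = 0 ∧ G'.fr v = 0 ∧
    G'.sgn u = !(G.sgn v) ∧ G'.sgn v = !(G.sgn u) ∧
    (∀ x, x ≠ u → x ≠ v → (G'.fr x = G.fr x ∧ G'.sgn x = G.sgn x))

/-- Ω4' at a vertex `v` labeled `(1,α)`: `G'` is the local complement `LC(G;v)`
with the sign of `v` changed to `-α` and the framing of every neighbour of `v` toggled. -/
def Omega4pAt (G G' : LGraph) (v : ℕ) : Prop :=
  v ∈ G.verts ∧ G.fr v = 1 ∧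
    G'.verts = G.verts ∧
    (∀ x y, G'.adj x y =
      (if x ≠ y ∧ G.adj v x = true ∧ G.adj v y = true
       then !(G.adj x y) else G.adj x y)) ∧
    G'.fr v = G.fr v ∧ G'.sgn v = !(G.sgn v) ∧
    (∀ x, x ≠ v → G'.sgn x = G.sgn x) ∧
    (∀ x, x ≠ v → G'.fr x = (if G.adj v x then G.fr x + 1 else G.fr x))

/-- A single graph-move `Ω1`–`Ω4'` (in either direction). -/
inductive Move : LGraph → LGraph → Prop
  | o1a {G G' v} : Omega1AddAt G G' v → Move G G'
  | o1r {G G' v} : Omega1AddAt G' G v → Move G G'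
  | o2a {G G' u v} : Omega2AddAt G G' u v → Move G G'
  | o2r {G G' u v} : Omega2AddAt G' G u v → Move G G'
  | o3f {G G' u v w} : Omega3FwdAt G G' u v w → Move G G'
  | o3b {G G' u v w} : Omega3FwdAt G' G u v w → Move G G'
  | o4 {G G' u v} : Omega4At G G' u v → Move G G'
  | o4i {G G' u v} : Omega4At G' G u v → Move G G'
  | o4p {G G' v} : Omega4pAt G G' v → Move G G'
  | o4pi {G G' v} : Omega4pAt G' G v → Move G G'

end LGraph
namespace LGraph

/-- The induced labeled subgraph of `G` on a set `s` of vertices. -/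
def induce (G : LGraph) (s : Finset ℕ) : LGraph where
  verts := s ∩ G.verts
  adj := fun x y => decide (x ∈ s) && decide (y ∈ s) && G.adj x y
  symm := by
    intro x y
    cases h1 : decide (x ∈ s) <;> cases h2 : decide (y ∈ s) <;>
      simp [h1, h2, G.symm x y]
  loopless := by intro x; simp [G.loopless x]
  adj_mem := by
    intro x y h
    simp only [Bool.and_eq_true, decide_eq_true_eq] at h
    exact ⟨Finset.mem_inter.2 ⟨h.1.1, (G.adj_mem x y h.2).1⟩,
           Finset.mem_inter.2 ⟨h.1.2, (G.adj_mem x y h.2).2⟩⟩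
  fr := G.fr
  sgn := G.sgn

/-- `α(s)`: the number of vertices in `s` with sign `-` plus the number of
vertices in `V(G) \ s` with sign `+`. -/
def alphaS (G : LGraph) (s : Finset ℕ) : ℕ :=
  (s.filter (fun v => G.sgn v = false)).card +
  ((G.verts \ s).filter (fun v => G.sgn v = true)).card

/-- `β(s) = |V(G)| - α(s)`. -/
def betaS (G : LGraph) (s : Finset ℕ) : ℕ := G.verts.card - G.alphaS s

/-- The Kauffman bracket polynomial
`⟨G⟩ = Σ_s a^(α(s)-β(s)) (-a²-a⁻²)^(corank A(G(s)))` of a labeled graph, as a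
Laurent polynomial in `a` over `ℤ`. -/
noncomputable def bracket (G : LGraph) : LaurentPolynomial ℤ :=
  ∑ s ∈ G.verts.powerset,
    LaurentPolynomial.T ((G.alphaS s : ℤ) - (G.betaS s : ℤ)) *
      (-(LaurentPolynomial.T 2) - LaurentPolynomial.T (-2)) ^ ((G.induce s).corankA)

end LGraph

/-!
Split the states `s ⊆ V(G') = V(G) ∪ {v}` according to whether `v ∈ s`, pairing `t` with
`t ∪ {v}` for `t ⊆ V(G)`. Since `v` is isolated with framing `0`, `A(G'(t)) = A(G(t))` and
`A(G'(t ∪ {v})) = A(G(t)) ⊕ (0)`, so the corank rises by one exactly when `v` is in the state,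
while `v` shifts `α - β` by `σ(v)` or by `-σ(v)`. Each pair therefore contributes
`(a^σ + a^(-σ) (-a² - a⁻²))` times the term of `t` in `⟨G⟩`, and this factor is `-a^(-3σ)`.
-/

namespace Matrix

variable {R m n p q : Type*} [CommRing R] [StrongRankCondition R]
  [Fintype m] [Fintype n] [Fintype p] [Fintype q] [DecidableEq m] [DecidableEq n]

theorem rank_fromBlocks_zero_zero_zero (B : Matrix m n R) :
    (fromBlocks B 0 0 (0 : Matrix p q R)).rank = B.rank := by
  have hB : fromBlocks B 0 0 (0 : Matrix p q R) =
      fromRows 1 (0 : Matrix p m R) * B * fromCols 1 (0 : Matrix n q R) := by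
    rw [fromRows_mul, fromRows_mul_fromCols]; simp
  have hB' : B = fromCols (1 : Matrix m m R) (0 : Matrix m p R) *
      fromBlocks B 0 0 (0 : Matrix p q R) * fromRows (1 : Matrix n n R) (0 : Matrix q n R) := by
    rw [hB]; simp [fromCols_mul_fromRows]
  refine le_antisymm ?_ ?_
  · rw [hB]; exact (rank_mul_le_left _ _).trans (rank_mul_le_right _ _)
  · conv_lhs => rw [hB']
    exact (rank_mul_le_left _ _).trans (rank_mul_le_right _ _)

end Matrix

namespace LGraph

open Finset LaurentPolynomial

def sign (G : LGraph) (x : ℕ) : ℤ := if G.sgn x then 1 else -1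

theorem sign_eq_one_or_eq_neg_one (G : LGraph) (x : ℕ) : G.sign x = 1 ∨ G.sign x = -1 := by
  unfold sign; split_ifs <;> simp

noncomputable def loopValue : LaurentPolynomial ℤ := -T 2 - T (-2)

noncomputable def stateTerm (G : LGraph) (s : Finset ℕ) : LaurentPolynomial ℤ :=
  T ((G.alphaS s : ℤ) - G.betaS s) * loopValue ^ (G.induce s).corankA

theorem bracket_eq_sum_stateTerm (G : LGraph) :
    G.bracket = ∑ s ∈ G.verts.powerset, G.stateTerm s := rfl

theorem T_add_T_neg_mul_loopValue {σ : ℤ} (hσ : σ = 1 ∨ σ = -1) :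
    T σ + T (-σ) * loopValue = -T (-3 * σ) := by
  have hT (m n : ℤ) : T m * T n = (T (m + n) : LaurentPolynomial ℤ) := (T_add m n).symm
  rcases hσ with rfl | rfl <;> simp only [loopValue, mul_sub, mul_neg, hT] <;> norm_num
  abel

theorem alphaS_le_card (G : LGraph) {s : Finset ℕ} (hs : s ⊆ G.verts) :
    G.alphaS s ≤ G.verts.card :=
  calc G.alphaS s ≤ s.card + (G.verts \ s).card :=
        add_le_add (card_filter_le _ _) (card_filter_le _ _)
    _ = G.verts.card := by rw [card_sdiff_of_subset hs, Nat.add_sub_cancel' (card_le_card hs)]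

theorem alphaS_eq_card_filter (G : LGraph) {s : Finset ℕ} (hs : s ⊆ G.verts) :
    G.alphaS s = #(G.verts.filter fun x => (x ∈ s ↔ G.sgn x = false)) := by
  rw [alphaS, ← card_union_of_disjoint]
  · congr 1
    ext x
    simp only [mem_union, mem_filter, mem_sdiff]
    by_cases hx : x ∈ s
    · cases G.sgn x <;> simp [hx, hs hx]
    · cases G.sgn x <;> simp [hx]
  · exact (disjoint_sdiff.mono_left (filter_subset _ _)).mono_right (filter_subset _ _)

theorem corankA_congr {G₁ G₂ : LGraph} (e : G₂.verts ≃ G₁.verts)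
    (hA : ∀ i j, G₁.A (e i) (e j) = G₂.A i j) : G₁.corankA = G₂.corankA := by
  have hsub : G₁.A.submatrix e e = G₂.A := Matrix.ext hA
  rw [corankA, corankA, ← hsub, Matrix.rank_submatrix, Fintype.card_congr e]

theorem corankA_eq_of_agree {G₁ G₂ : LGraph} (hV : G₁.verts = G₂.verts)
    (hadj : ∀ x ∈ G₁.verts, ∀ y ∈ G₁.verts, G₁.adj x y = G₂.adj x y)
    (hfr : ∀ x ∈ G₁.verts, G₁.fr x = G₂.fr x) : G₁.corankA = G₂.corankA := by
  refine (corankA_congr (Equiv.subtypeEquivRight fun x => by rw [hV]) fun i j => ?_).symm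
  simp [A, hadj i i.2 j j.2, hfr i i.2]

namespace Omega1AddAt

variable {G G' : LGraph} {v : ℕ}

theorem notMem_verts (h : Omega1AddAt G G' v) : v ∉ G.verts := h.1

theorem verts_eq (h : Omega1AddAt G G' v) : G'.verts = insert v G.verts := h.2.1

theorem induce_insert (h : Omega1AddAt G G' v) (t : Finset ℕ) :
    Omega1AddAt (G.induce t) (G'.induce (insert v t)) v := by
  obtain ⟨hv, hverts, hfr, hadj, hadj_out, hlab_out⟩ := h
  refine ⟨fun hvt => hv (mem_inter.1 hvt).2, ?_, hfr, fun x => by simp [induce, hadj], ?_, ?_⟩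
  · change insert v t ∩ G'.verts = insert v (t ∩ G.verts)
    rw [hverts, insert_inter_distrib]
  · intro x y hx hy
    have hxv : x ≠ v := by simpa using hx
    have hyv : y ≠ v := by simpa using hy
    simp [induce, hxv, hyv, hadj_out x y hx hy]
  · exact hlab_out

theorem corankA_eq_add_one (h : Omega1AddAt G G' v) : G'.corankA = G.corankA + 1 := by
  obtain ⟨hv, hverts, hfr, hadj, hadj_out, hlab_out⟩ := h
  let e : G.verts ⊕ PUnit.{1} ≃ G'.verts :=
    ((Equiv.subtypeEquivRight fun x => by rw [hverts]).trans
      ((subtypeInsertEquivOption hv).trans (Equiv.optionEquivSumPUnit _))).symm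
  have hne : ∀ x : G.verts, (x : ℕ) ≠ v := fun x hx => hv (hx ▸ x.2)
  have he_inl : ∀ x, (e (.inl x) : ℕ) = x := fun _ => rfl
  have he_inr : ∀ u, (e (.inr u) : ℕ) = v := fun _ => rfl
  have hblocks : G'.A.submatrix e e = Matrix.fromBlocks G.A 0 0 0 := by
    ext (x | _) (y | _)
    · simp [A, he_inl, hadj_out x y (by simpa using hne x) (by simpa using hne y),
        (hlab_out x (by simpa using hne x)).1]
    · simp [A, he_inl, he_inr, hne x, G'.symm x v, hadj]
    · simp [A, he_inl, he_inr, (hne y).symm, hadj]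
    · simp [A, he_inr, hfr]
  have hcard : Fintype.card G'.verts = Fintype.card G.verts + 1 := by
    simp [← Fintype.card_congr e]
  have hrank : G'.A.rank = G.A.rank := by
    rw [← Matrix.rank_submatrix G'.A e e, hblocks, Matrix.rank_fromBlocks_zero_zero_zero]
  rw [corankA, corankA, hcard, hrank, Nat.sub_add_comm G.A.rank_le_card_width]

theorem corankA_induce_of_notMem (h : Omega1AddAt G G' v) {t : Finset ℕ} (hvt : v ∉ t) :
    (G'.induce t).corankA = (G.induce t).corankA := by
  obtain ⟨hv, hverts, -, -, hadj_out, hlab_out⟩ := h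
  have hne : ∀ x ∈ t, x ∉ ({v} : Finset ℕ) := fun x hx => by
    simpa using fun hxv : x = v => hvt (hxv ▸ hx)
  refine corankA_eq_of_agree ?_ (fun x hx y hy => ?_) (fun x hx => ?_)
  · change t ∩ G'.verts = t ∩ G.verts
    rw [hverts, inter_insert_of_notMem hvt]
  · have hx := (mem_inter.1 hx).1
    have hy := (mem_inter.1 hy).1
    simp [induce, hx, hy, hadj_out x y (hne x hx) (hne y hy)]
  · exact (hlab_out x (hne x (mem_inter.1 hx).1)).1

theorem sgn_eq_of_ne (h : Omega1AddAt G G' v) {x : ℕ} (hx : x ≠ v) : G'.sgn x = G.sgn x :=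
  (h.2.2.2.2.2 x (by simpa using hx)).2

theorem alphaS_eq (h : Omega1AddAt G G' v) {s : Finset ℕ} (hs : s ⊆ G'.verts) :
    G'.alphaS s = G.alphaS (s.erase v) + if (v ∈ s ↔ G'.sgn v = false) then 1 else 0 := by
  have hs' : s.erase v ⊆ G.verts := by rw [← subset_insert_iff, ← h.verts_eq]; exact hs
  have hfilter : G.verts.filter (fun x => (x ∈ s ↔ G'.sgn x = false)) =
      G.verts.filter (fun x => (x ∈ s.erase v ↔ G.sgn x = false)) := by
    refine filter_congr fun x hx => ?_
    have hxv : x ≠ v := fun hxv => h.notMem_verts (hxv ▸ hx)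
    rw [mem_erase, h.sgn_eq_of_ne hxv, and_iff_right hxv]
  rw [G'.alphaS_eq_card_filter hs, G.alphaS_eq_card_filter hs', h.verts_eq, filter_insert, hfilter]
  split_ifs
  · exact card_insert_of_notMem fun hv => h.notMem_verts (mem_filter.1 hv).1
  · rfl

theorem alphaS_sub_betaS (h : Omega1AddAt G G' v) {s : Finset ℕ} (hs : s ⊆ G'.verts) :
    (G'.alphaS s : ℤ) - G'.betaS s = (G.alphaS (s.erase v) - G.betaS (s.erase v)) +
      if (v ∈ s ↔ G'.sgn v = false) then 1 else -1 := by
  have hs' : s.erase v ⊆ G.verts := by rw [← subset_insert_iff, ← h.verts_eq]; exact hs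
  have hcard : G'.verts.card = G.verts.card + 1 := by
    rw [h.verts_eq, card_insert_of_notMem h.notMem_verts]
  have hle := G.alphaS_le_card hs'
  rw [betaS, betaS, h.alphaS_eq hs, hcard]
  split_ifs <;> omega

theorem stateTerm_add_stateTerm_insert (h : Omega1AddAt G G' v) {t : Finset ℕ}
    (ht : t ⊆ G.verts) :
    G'.stateTerm t + G'.stateTerm (insert v t) = -T (-3 * G'.sign v) * G.stateTerm t := by
  have hvt : v ∉ t := fun hv => h.notMem_verts (ht hv)
  have hexp : (G'.alphaS t : ℤ) - G'.betaS t = (G.alphaS t - G.betaS t) + G'.sign v := by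
    rw [h.alphaS_sub_betaS (h.verts_eq ▸ ht.trans (subset_insert v _)), erase_eq_of_notMem hvt]
    cases hs : G'.sgn v <;> simp [sign, hvt, hs]
  have hexp_insert : (G'.alphaS (insert v t) : ℤ) - G'.betaS (insert v t) =
      (G.alphaS t - G.betaS t) - G'.sign v := by
    rw [h.alphaS_sub_betaS (h.verts_eq ▸ insert_subset_insert v ht), erase_insert hvt]
    cases hs : G'.sgn v <;> simp [sign, hs, sub_eq_add_neg]
  rw [stateTerm, stateTerm, stateTerm, hexp, hexp_insert, h.corankA_induce_of_notMem hvt,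
    (h.induce_insert t).corankA_eq_add_one,
    ← T_add_T_neg_mul_loopValue (G'.sign_eq_one_or_eq_neg_one v), T_add _ (G'.sign v),
    T_sub _ (G'.sign v), pow_succ]
  ring

theorem bracket_eq (h : Omega1AddAt G G' v) :
    G'.bracket = -T (-3 * G'.sign v) * G.bracket := by
  rw [bracket_eq_sum_stateTerm, bracket_eq_sum_stateTerm, h.verts_eq,
    sum_powerset_insert h.notMem_verts, ← sum_add_distrib, mul_sum]
  exact sum_congr rfl fun t ht => h.stateTerm_add_stateTerm_insert (mem_powerset.1 ht)

end Omega1AddAt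

end LGraph

/-- Adding an isolated vertex with framing `0` and sign `α`
(move `Ω1`) multiplies the Kauffman bracket by `-a^{-3}` if `α = +` and by
`-a^{3}` if `α = -`. -/
theorem bracket_omega1 (G G' : LGraph) (v : ℕ) (h : LGraph.Omega1AddAt G G' v) :
    (G'.sgn v = true →
      G'.bracket = -(LaurentPolynomial.T (-3)) * G.bracket) ∧
    (G'.sgn v = false →
      G'.bracket = -(LaurentPolynomial.T 3) * G.bracket) :=
  ⟨fun hs => by simpa [LGraph.sign, hs] using h.bracket_eq,
    fun hs => by simpa [LGraph.sign, hs] using h.bracket_eq⟩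
end

section
/- Let G be a labeled graph with a vertex v carrying label (1,α), and let G' be obtained from G by the graph-move Ω4': replace G by LC(G;v), change the sign of v to −α, and toggle the framing of every vertex adjacent to v. Then ⟨G'⟩ = ⟨G⟩. -/
/-! Since `G.fr v = 1`, the vertex `v` is a nonzero pivot of `A(G(s ∪ {v}))` over `ZMod 2`, and
for `v ∉ s` the Schur complement at `v` is exactly `A(G'(s))`: its rank-one correction toggles
the entry `x y` iff both `x` and `y` are neighbours of `v`, which is the local complementation off
the diagonal and the framing toggle on it. Schur complements preserve corank, and the sign change
at `v` gives `α_{G'}(s) = α_G(s ∪ {v})`, so the summand of `s` in `⟨G'⟩` is the summand of `s ∪ {v}`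
in `⟨G⟩`. Since `Ω4'` is an involution, the summand of `s ∪ {v}` in `⟨G'⟩` is likewise the summand
of `s` in `⟨G⟩`. -/

namespace Matrix

open LinearMap

variable {F : Type*} [Field F] {n : Type*} [Fintype n]

lemma card_sub_rank_eq_finrank_ker {m : Type*} [Fintype m] (M : Matrix m n F) :
    Fintype.card n - M.rank = Module.finrank F (ker M.mulVecLin) := by
  have := M.mulVecLin.finrank_range_add_finrank_ker
  rw [Module.finrank_fintype_fun_eq_card] at this
  rw [Matrix.rank]
  omega

variable [DecidableEq n]

def schurComplementAt (M : Matrix n n F) (p : n) : Matrix {x // x ≠ p} {x // x ≠ p} F :=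
  of fun x y => M x y - M x p * (M p p)⁻¹ * M p y

lemma schurComplementAt_mulVec (M : Matrix n n F) (p : n) (hp : M p p ≠ 0) (x : n → F) :
    M.schurComplementAt p *ᵥ (fun t => x t) =
      fun s : {x // x ≠ p} => (M *ᵥ x) s - M s p * (M p p)⁻¹ * (M *ᵥ x) p := by
  ext s
  simp only [mulVec, dotProduct, schurComplementAt, of_apply,
    Fintype.sum_eq_add_sum_subtype_ne _ p, sub_mul, Finset.sum_sub_distrib, mul_add,
    Finset.mul_sum]
  field_simp
  ring

lemma mulVec_apply_eq_add_sum_ne (M : Matrix n n F) (p : n) (x : n → F) :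
    (M *ᵥ x) p = M p p * x p + ∑ t : {x // x ≠ p}, M p t * x t :=
  Fintype.sum_eq_add_sum_subtype_ne _ p

lemma finrank_ker_schurComplementAt (M : Matrix n n F) (p : n) (hp : M p p ≠ 0) :
    Module.finrank F (ker (M.schurComplementAt p).mulVecLin) =
      Module.finrank F (ker M.mulVecLin) := by
  -- Restricting to the coordinates `≠ p` is a bijection of kernels: on `ker M` the `p`-th
  -- equation determines `x p` from the other coordinates.
  have hmaps : ∀ x ∈ ker M.mulVecLin,
      funLeft F F Subtype.val x ∈ ker (M.schurComplementAt p).mulVecLin := by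
    intro x hx
    rw [mem_ker, mulVecLin_apply] at hx ⊢
    ext s
    simp [funLeft, Function.comp_def, schurComplementAt_mulVec M p hp, hx]
  symm
  refine LinearEquiv.finrank_eq (LinearEquiv.ofBijective
    ((funLeft F F Subtype.val).restrict hmaps) ⟨?_, ?_⟩)
  · refine (injective_iff_map_eq_zero _).2 fun ⟨x, hx⟩ hx0 => ?_
    rw [mem_ker, mulVecLin_apply] at hx
    have hrest : ∀ t : {x // x ≠ p}, x t = 0 := fun t =>
      congrFun (congrArg Subtype.val hx0) t
    have hxp : x p = 0 := by
      simpa [mulVec_apply_eq_add_sum_ne M p, hrest, hp] using congrFun hx p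
    ext t
    by_cases ht : t = p
    · simp [ht, hxp]
    · exact hrest ⟨t, ht⟩
  · rintro ⟨y, hy⟩
    rw [mem_ker, mulVecLin_apply] at hy
    set x : n → F := fun t =>
      if ht : t = p then -(M p p)⁻¹ * ∑ s : {x // x ≠ p}, M p s * y s else y ⟨t, ht⟩
    have hrest : (fun t : {x // x ≠ p} => x t) = y := by
      ext t
      simp [x, t.2]
    have hxp : (M *ᵥ x) p = 0 := by
      have hy' : ∀ t : {x // x ≠ p}, x t = y t := congrFun hrest
      rw [mulVec_apply_eq_add_sum_ne]
      simp only [hy']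
      simp only [x, dif_pos]
      field_simp
      ring
    have hx : M *ᵥ x = 0 := by
      ext t
      by_cases ht : t = p
      · rw [ht, hxp, Pi.zero_apply]
      · simpa [hrest, hy, hxp] using
          (congrFun (schurComplementAt_mulVec M p hp x) ⟨t, ht⟩).symm
    exact ⟨⟨x, by rwa [mem_ker, mulVecLin_apply]⟩, Subtype.ext hrest⟩

theorem card_sub_rank_schurComplementAt (M : Matrix n n F) (p : n) (hp : M p p ≠ 0) :
    Fintype.card {x // x ≠ p} - (M.schurComplementAt p).rank = Fintype.card n - M.rank := by
  rw [card_sub_rank_eq_finrank_ker, card_sub_rank_eq_finrank_ker,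
    finrank_ker_schurComplementAt M p hp]

end Matrix

namespace LGraph

def mat (G : LGraph) : Matrix ℕ ℕ (ZMod 2) :=
  fun x y => if x = y then G.fr x else if G.adj x y then 1 else 0

lemma A_induce_apply (G : LGraph) (s : Finset ℕ) (x y : (G.induce s).verts) :
    (G.induce s).A x y = G.mat x y := by
  have hx := (Finset.mem_inter.1 x.2).1
  have hy := (Finset.mem_inter.1 y.2).1
  simp [A, mat, induce, hx, hy]

noncomputable def bracketTerm (G : LGraph) (s : Finset ℕ) : LaurentPolynomial ℤ :=
  LaurentPolynomial.T ((G.alphaS s : ℤ) - (G.betaS s : ℤ)) *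
    (-(LaurentPolynomial.T 2) - LaurentPolynomial.T (-2)) ^ ((G.induce s).corankA)

lemma bracket_eq_sum_insert (G : LGraph) {v : ℕ} {W : Finset ℕ} (hG : G.verts = insert v W)
    (hvW : v ∉ W) :
    G.bracket = ∑ t ∈ W.powerset, (G.bracketTerm t + G.bracketTerm (insert v t)) := by
  rw [bracket, hG, Finset.sum_powerset_insert hvW, ← Finset.sum_add_distrib]
  rfl

namespace Omega4pAt

variable {G G' : LGraph} {v : ℕ}

lemma verts_eq (h : Omega4pAt G G' v) : G'.verts = G.verts := h.2.2.1

lemma adj_left (h : Omega4pAt G G' v) (x : ℕ) : G'.adj v x = G.adj v x := by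
  obtain ⟨-, -, -, hadj, -⟩ := h
  simp [hadj v x, G.loopless v]

theorem symm (h : Omega4pAt G G' v) : Omega4pAt G' G v := by
  have hadj' := adj_left h
  obtain ⟨hv, hfr1, hverts, hadj, hfrv, hsgnv, hsgn, hfr⟩ := h
  refine ⟨hverts ▸ hv, hfrv.trans hfr1, hverts.symm, fun x y => ?_, hfrv.symm, by simp [hsgnv],
    fun x hx => (hsgn x hx).symm, fun x hx => ?_⟩
  · rw [hadj', hadj', hadj x y]
    split_ifs <;> simp
  · rw [hadj', hfr x hx]
    split_ifs
    · rw [add_assoc, CharTwo.add_self_eq_zero, add_zero]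
    · rfl

lemma mat_eq_sub (h : Omega4pAt G G' v) {a b : ℕ} (ha : a ≠ v) (hb : b ≠ v) :
    G'.mat a b = G.mat a b - G.mat a v * G.mat v b := by
  obtain ⟨-, -, -, hadj, -, -, -, hfr⟩ := h
  rw [CharTwo.sub_eq_add]
  have hav : G.adj a v = G.adj v a := G.symm a v
  by_cases hab : a = b
  · subst hab
    simp only [mat, if_pos, if_neg ha, if_neg (Ne.symm ha), hfr a ha, hav]
    cases G.adj v a <;> simp
  · simp only [mat, if_neg hab, if_neg ha, if_neg (Ne.symm hb), hadj a b, hav]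
    cases G.adj v a <;> cases G.adj v b <;> cases G.adj a b <;>
      simp [hab, CharTwo.add_self_eq_zero]

lemma corankA_induce (h : Omega4pAt G G' v) {t : Finset ℕ} (hvt : v ∉ t) :
    (G'.induce t).corankA = (G.induce (insert v t)).corankA := by
  have hverts := h.verts_eq
  have hne : ∀ x : (G'.induce t).verts, (x : ℕ) ≠ v := fun x hxv =>
    hvt (hxv ▸ (Finset.mem_inter.1 x.2).1)
  have hvv : G.mat v v = 1 := by simp [mat, h.2.1]
  set M := (G.induce (insert v t)).A
  let p : (G.induce (insert v t)).verts :=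
    ⟨v, Finset.mem_inter.2 ⟨Finset.mem_insert_self v t, h.1⟩⟩
  have hp : M p p ≠ 0 := by simp [M, A_induce_apply, p, hvv]
  let e : (G'.induce t).verts ≃ {x : (G.induce (insert v t)).verts // x ≠ p} :=
    { toFun := fun x => ⟨⟨x, by
          obtain ⟨hxt, hxV⟩ := Finset.mem_inter.1 x.2
          exact Finset.mem_inter.2 ⟨Finset.mem_insert_of_mem hxt, hverts ▸ hxV⟩⟩,
          fun hxp => hne x (congrArg Subtype.val hxp)⟩
      invFun := fun y => ⟨y.1, by
          obtain ⟨hyt, hyV⟩ := Finset.mem_inter.1 y.1.2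
          have hyv : (y : ℕ) ≠ v := fun hyv => y.2 (Subtype.ext hyv)
          exact Finset.mem_inter.2 ⟨(Finset.mem_insert.1 hyt).resolve_left hyv, hverts ▸ hyV⟩⟩
      left_inv := fun _ => rfl
      right_inv := fun _ => rfl }
  have hA : (G'.induce t).A = (M.schurComplementAt p).submatrix e e := by
    ext x y
    simpa [M, A_induce_apply, Matrix.schurComplementAt, e, p, hvv] using
      h.mat_eq_sub (hne x) (hne y)
  rw [corankA, corankA, hA, Matrix.rank_submatrix, Fintype.card_congr e,
    Matrix.card_sub_rank_schurComplementAt M p hp]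

lemma alphaS_insert (h : Omega4pAt G G' v) {t : Finset ℕ} (hvt : v ∉ t) :
    G'.alphaS t = G.alphaS (insert v t) := by
  obtain ⟨hvV, -, hverts, -, -, hsgnv, hsgn, -⟩ := h
  have hvW : v ∉ G.verts \ insert v t := by simp
  have hneg : t.filter (G'.sgn · = false) = t.filter (G.sgn · = false) :=
    Finset.filter_congr fun x hx => by rw [hsgn x (ne_of_mem_of_not_mem hx hvt)]
  have hpos : (G.verts \ insert v t).filter (G'.sgn · = true) =
      (G.verts \ insert v t).filter (G.sgn · = true) :=
    Finset.filter_congr fun x hx => by rw [hsgn x (ne_of_mem_of_not_mem hx hvW)]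
  have hsdiff : G.verts \ t = insert v (G.verts \ insert v t) := by
    rw [Finset.sdiff_insert, Finset.insert_erase (Finset.mem_sdiff.2 ⟨hvV, hvt⟩)]
  unfold alphaS
  rw [hverts, hsdiff, Finset.filter_insert, Finset.filter_insert, hneg, hpos, hsgnv]
  cases G.sgn v <;>
    simp [Finset.card_insert_of_notMem, hvt, hvW, add_assoc, add_comm, add_left_comm]

lemma bracketTerm_insert (h : Omega4pAt G G' v) {t : Finset ℕ} (hvt : v ∉ t) :
    G'.bracketTerm t = G.bracketTerm (insert v t) := by
  have hbeta : G'.betaS t = G.betaS (insert v t) := by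
    rw [betaS, betaS, h.alphaS_insert hvt, h.verts_eq]
  rw [bracketTerm, bracketTerm, h.alphaS_insert hvt, hbeta, h.corankA_induce hvt]

end Omega4pAt

end LGraph

/-- The Kauffman bracket is invariant under the graph-move
`Ω4'` (local complementation at a vertex labeled `(1,α)`, with the sign of `v`
changed to `-α` and the framings of all neighbours of `v` toggled). -/
theorem bracket_omega4p (G G' : LGraph) (v : ℕ)
    (h : LGraph.Omega4pAt G G' v) :
    G'.bracket = G.bracket := by
  have hvW : v ∉ G.verts.erase v := Finset.notMem_erase v _
  have hG : G.verts = insert v (G.verts.erase v) := (Finset.insert_erase h.1).symm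
  rw [G.bracket_eq_sum_insert hG hvW, G'.bracket_eq_sum_insert (h.verts_eq.trans hG) hvW]
  refine Finset.sum_congr rfl fun t ht => ?_
  have hvt : v ∉ t := fun hvt => hvW (Finset.mem_powerset.1 ht hvt)
  rw [h.bracketTerm_insert hvt, ← h.symm.bracketTerm_insert hvt, add_comm]
end

section
/- Call a vertex of a looped graph even if it is adjacent to an even number of vertices distinct from itself, and odd otherwise. Then the Reidemeister moves on looped graphs respect this parity: every vertex present both before and after a move L1, L2 or L3 has the same parity before and after the move; the two vertices added or removed in a move L2 have equal parity; and the vertex added or removed in a move L1 is even. -/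
/-- A *looped graph*: a finite simple graph together with a distinguished set
of looped vertices. -/
structure LoopedGraph where
  verts : Finset ℕ
  adj : ℕ → ℕ → Bool
  symm : ∀ x y, adj x y = adj y x
  loopless : ∀ x, adj x x = false
  adj_mem : ∀ x y, adj x y = true → x ∈ verts ∧ y ∈ verts
  looped : ℕ → Bool

namespace LoopedGraph

/-- `L'` agrees with `L` (adjacency and loops) away from the set `S`. -/
def sameOutside (L L' : LoopedGraph) (S : Finset ℕ) : Prop :=
  (∀ x y, x ∉ S → y ∉ S → L'.adj x y = L.adj x y) ∧
  (∀ x, x ∉ S → L'.looped x = L.looped x)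

/-- L1 (addition direction): addition of an isolated vertex, looped or unlooped. -/
def L1AddAt (L L' : LoopedGraph) (v : ℕ) : Prop :=
  v ∉ L.verts ∧ L'.verts = insert v L.verts ∧
    (∀ x, L'.adj v x = false) ∧ sameOutside L L' {v}

/-- L2 (addition direction): addition of two vertices, one looped and one
unlooped, having the same adjacencies with all other vertices. -/
def L2AddAt (L L' : LoopedGraph) (u v : ℕ) : Prop :=
  u ≠ v ∧ u ∉ L.verts ∧ v ∉ L.verts ∧
    L'.verts = insert u (insert v L.verts) ∧
    L'.looped u = !(L'.looped v) ∧
    (∀ x, x ≠ u → x ≠ v → L'.adj u x = L'.adj v x) ∧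
    sameOutside L L' {u, v}

/-- L3 at `u, v, w`: `v` looped, `w` unlooped, `v` and `w` adjacent, `u`
adjacent to neither `v` nor `w`, and every other vertex adjacent to `0` or
exactly `2` of `u, v, w`; the adjacencies of the three pairs are toggled. -/
def L3At (L L' : LoopedGraph) (u v w : ℕ) : Prop :=
  u ≠ v ∧ u ≠ w ∧ v ≠ w ∧ u ∈ L.verts ∧ v ∈ L.verts ∧ w ∈ L.verts ∧
    L.looped v = true ∧ L.looped w = false ∧
    L.adj v w = true ∧ L.adj u v = false ∧ L.adj u w = false ∧
    (∀ x, x ≠ u → x ≠ v → x ≠ w →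
      ((L.adj u x = false ∧ L.adj v x = false ∧ L.adj w x = false) ∨
       (L.adj u x = true ∧ L.adj v x = true ∧ L.adj w x = false) ∨
       (L.adj u x = true ∧ L.adj v x = false ∧ L.adj w x = true) ∨
       (L.adj u x = false ∧ L.adj v x = true ∧ L.adj w x = true))) ∧
    L'.verts = L.verts ∧
    L'.adj u v = true ∧ L'.adj u w = true ∧ L'.adj v w = false ∧
    (∀ x y, x ∉ ({u, v, w} : Finset ℕ) ∨ y ∉ ({u, v, w} : Finset ℕ) →
      L'.adj x y = L.adj x y) ∧
    (∀ x, L'.looped x = L.looped x)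

/-- A single Reidemeister move on looped graphs (in either direction). -/
inductive LMove : LoopedGraph → LoopedGraph → Prop
  | l1a {L L' v} : L1AddAt L L' v → LMove L L'
  | l1r {L L' v} : L1AddAt L' L v → LMove L L'
  | l2a {L L' u v} : L2AddAt L L' u v → LMove L L'
  | l2r {L L' u v} : L2AddAt L' L u v → LMove L L'
  | l3f {L L' u v w} : L3At L L' u v w → LMove L L'
  | l3b {L L' u v w} : L3At L' L u v w → LMove L L'

/-- Homotopy of looped graphs: a finite sequence of Reidemeister moves. -/
def Homotopic : LoopedGraph → LoopedGraph → Prop :=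
  Relation.ReflTransGen LMove

end LoopedGraph
namespace LoopedGraph

/-- A vertex of a looped graph is *even* if it is adjacent to an even number
of vertices distinct from itself. -/
def EvenV (L : LoopedGraph) (v : ℕ) : Prop :=
  Even ((L.verts.filter (fun x => L.adj v x = true)).card)

end LoopedGraph

/-!
Every move changes the neighbourhood of a surviving vertex by a set of even size: `L1` and
`L2` only add isolated vertices or twins (a vertex adjacent to one twin is adjacent to both),
and `L3` toggles the edges of a triangle, so each of its corners gains or loses exactly two
neighbours. The two twins of `L2` have neighbourhoods that differ at most in each other.
-/

open scoped symmDiff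

namespace Finset

variable {α : Type*} [DecidableEq α]

theorem even_card_iff_of_even_card_symmDiff {s t : Finset α} (h : Even (s ∆ t).card) :
    Even s.card ↔ Even t.card := by
  have hs := card_sdiff_add_card_inter s t
  have ht := card_sdiff_add_card_inter t s
  rw [Finset.symmDiff_def, card_union_of_disjoint disjoint_sdiff_sdiff] at h
  rw [inter_comm] at ht
  rw [← hs, ← ht]
  simp only [Nat.even_iff] at h ⊢
  omega

theorem even_card_filter_pair {a b : α} (hab : a ≠ b) (p : α → Prop) [DecidablePred p]
    (h : p a ↔ p b) : Even (({a, b} : Finset α).filter p).card := by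
  by_cases ha : p a
  · rw [filter_true_of_mem (by simp [ha, ← h]), card_pair hab]
    exact even_two
  · rw [filter_false_of_mem (by simp [ha, ← h])]
    exact Even.zero

end Finset

namespace LoopedGraph

variable {L L' : LoopedGraph}

def nbhd (L : LoopedGraph) (x : ℕ) : Finset ℕ :=
  L.verts.filter (fun y => L.adj x y = true)

theorem mem_nbhd {x y : ℕ} : y ∈ L.nbhd x ↔ L.adj x y = true := by
  simp only [nbhd, Finset.mem_filter, and_iff_right_iff_imp]
  exact fun h => (L.adj_mem x y h).2

theorem evenV_iff_even_card_nbhd {x : ℕ} : L.EvenV x ↔ Even (L.nbhd x).card := Iff.rfl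

theorem adj_eq_false_of_not_mem {x y : ℕ} (hy : y ∉ L.verts) : L.adj x y = false := by
  by_contra h
  exact hy (L.adj_mem x y (Bool.not_eq_false _ ▸ h)).2

theorem evenV_iff_of_adj_eq {x y : ℕ} (h : ∀ z, L'.adj y z = L.adj x z) :
    L.EvenV x ↔ L'.EvenV y := by
  have : L'.nbhd y = L.nbhd x := by ext z; simp only [mem_nbhd, h]
  rw [evenV_iff_even_card_nbhd, evenV_iff_even_card_nbhd, this]

theorem evenV_iff_of_adj_eq_off_pair {x y a b : ℕ} (hab : a ≠ b)
    (hoff : ∀ z, z ≠ a → z ≠ b → L'.adj y z = L.adj x z)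
    (hpair : L.adj x a = L'.adj y a ↔ L.adj x b = L'.adj y b) :
    L.EvenV x ↔ L'.EvenV y := by
  have hdiff : L.nbhd x ∆ L'.nbhd y =
      ({a, b} : Finset ℕ).filter (fun z => L.adj x z ≠ L'.adj y z) := by
    ext z
    simp only [Finset.mem_symmDiff, mem_nbhd, Finset.mem_filter, Finset.mem_insert,
      Finset.mem_singleton]
    by_cases hz : z = a ∨ z = b
    · simp only [hz, true_and]
      cases L.adj x z <;> cases L'.adj y z <;> decide
    · push Not at hz
      simp [hz, hoff z hz.1 hz.2]
  exact Finset.even_card_iff_of_even_card_symmDiff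
    (hdiff ▸ Finset.even_card_filter_pair hab _ (not_congr hpair))

variable {u v w x : ℕ}

theorem L1AddAt.evenV_iff (h : L1AddAt L L' v) (hx : x ≠ v) : L.EvenV x ↔ L'.EvenV x := by
  obtain ⟨hv, -, hiso, hout, -⟩ := h
  refine evenV_iff_of_adj_eq fun z => ?_
  by_cases hz : z = v
  · rw [hz, L'.symm, hiso, adj_eq_false_of_not_mem hv]
  · exact hout x z (by simpa using hx) (by simpa using hz)

theorem L1AddAt.evenV (h : L1AddAt L L' v) : L'.EvenV v := by
  obtain ⟨-, -, hiso, -⟩ := h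
  have : L'.nbhd v = ∅ := Finset.eq_empty_of_forall_notMem fun z => by simp [mem_nbhd, hiso z]
  exact evenV_iff_even_card_nbhd.2 (this ▸ Even.zero)

theorem L2AddAt.evenV_iff (h : L2AddAt L L' u v) (hxu : x ≠ u) (hxv : x ≠ v) :
    L.EvenV x ↔ L'.EvenV x := by
  obtain ⟨huv, hu, hv, -, -, htwin, hout, -⟩ := h
  refine evenV_iff_of_adj_eq_off_pair huv
    (fun z hzu hzv => hout x z (by simp [hxu, hxv]) (by simp [hzu, hzv])) ?_
  rw [adj_eq_false_of_not_mem hu, adj_eq_false_of_not_mem hv, L'.symm x u, L'.symm x v,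
    htwin x hxu hxv]

theorem L2AddAt.evenV_iff_evenV (h : L2AddAt L L' u v) : L'.EvenV u ↔ L'.EvenV v := by
  obtain ⟨huv, -, -, -, -, htwin, -⟩ := h
  refine evenV_iff_of_adj_eq_off_pair huv (fun z hzu hzv => (htwin z hzu hzv).symm) ?_
  rw [L'.loopless, L'.loopless, L'.symm v u, eq_comm]

theorem L3At.evenV_iff (h : L3At L L' u v w) : L.EvenV x ↔ L'.EvenV x := by
  obtain ⟨huv, huw, hvw, -, -, -, -, -, hvw₀, huv₀, huw₀, -, -, huv₁, huw₁, hvw₁, hout, -⟩ :=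
    h
  by_cases hx : x ∈ ({u, v, w} : Finset ℕ)
  swap
  · exact evenV_iff_of_adj_eq fun z => hout x z (Or.inl hx)
  have hfix : ∀ z, z = x ∨ z ≠ u ∧ z ≠ v ∧ z ≠ w → L'.adj x z = L.adj x z := by
    rintro z (rfl | hz)
    · rw [L.loopless, L'.loopless]
    · exact hout x z (Or.inr (by simpa using hz))
  simp only [Finset.mem_insert, Finset.mem_singleton] at hx
  rcases hx with hx | hx | hx <;> subst x
  · refine evenV_iff_of_adj_eq_off_pair hvw (fun z hzv hzw => hfix z (by tauto)) ?_
    rw [huv₀, huw₀, huv₁, huw₁]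
  · refine evenV_iff_of_adj_eq_off_pair huw (fun z hzu hzw => hfix z (by tauto)) ?_
    rw [L.symm v u, L'.symm v u, huv₀, huv₁, hvw₀, hvw₁]
    decide
  · refine evenV_iff_of_adj_eq_off_pair huv (fun z hzu hzv => hfix z (by tauto)) ?_
    rw [L.symm w u, L'.symm w u, L.symm w v, L'.symm w v, huw₀, huw₁, hvw₀, hvw₁]
    decide

end LoopedGraph

/-- The Reidemeister moves on looped graphs respect the
parity of vertices: every vertex present both before and after a move `L1`,
`L2` or `L3` has the same parity before and after; the two vertices added or
removed by `L2` have equal parity; the vertex added or removed by `L1` is even. -/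
theorem parity_invariant_under_LMoves :
    (∀ (L L' : LoopedGraph) (v : ℕ), LoopedGraph.L1AddAt L L' v →
      (∀ x ∈ L.verts, (L.EvenV x ↔ L'.EvenV x)) ∧ L'.EvenV v) ∧
    (∀ (L L' : LoopedGraph) (u v : ℕ), LoopedGraph.L2AddAt L L' u v →
      (∀ x ∈ L.verts, (L.EvenV x ↔ L'.EvenV x)) ∧ (L'.EvenV u ↔ L'.EvenV v)) ∧
    (∀ (L L' : LoopedGraph) (u v w : ℕ), LoopedGraph.L3At L L' u v w →
      ∀ x ∈ L.verts, (L.EvenV x ↔ L'.EvenV x)) := by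
  refine ⟨fun L L' v h => ⟨fun x hx => h.evenV_iff ?_, h.evenV⟩,
    fun L L' u v h => ⟨fun x hx => h.evenV_iff ?_ ?_, h.evenV_iff_evenV⟩,
    fun L L' u v w h _ _ => h.evenV_iff⟩
  · exact ne_of_mem_of_not_mem hx h.1
  · exact ne_of_mem_of_not_mem hx h.2.1
  · exact ne_of_mem_of_not_mem hx h.2.2.1
end

section
/- Let G be a labeled graph with vertices v_1,…,v_n and suppose the vertex v_i is oriented, i.e. corank(A(G)+E) ≤ corank(B_i(G)), where B_i(G) = A(G)+E+E_{ii}. Then corank(B_i(G)) ≠ corank(A(G − v_i)+E), where G − v_i denotes the labeled graph obtained from G by deleting the vertex v_i. -/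
namespace LGraph

/-- `corank B_i(G)` where `B_i(G) = A(G) + E + E_{ii}`. -/
noncomputable def corankB (G : LGraph) (v : G.verts) : ℕ :=
  Fintype.card G.verts - (G.A + 1 + Matrix.single v v 1).rank

/-- The writhe number `w_i = (-1)^(corank B_i(G)) · sign(v_i)` of a vertex. -/
noncomputable def wr (G : LGraph) (v : G.verts) : ℤ :=
  (-1) ^ (G.corankB v) * (if G.sgn v then 1 else -1)

/-- The writhe number `w(G) = Σ_i w_i` of a labeled graph. -/
noncomputable def writhe (G : LGraph) : ℤ := ∑ v : G.verts, G.wr v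

end LGraph
namespace LGraph

/-- The labeled graph obtained from `G` by deleting the vertex `v`. -/
def delete (G : LGraph) (v : ℕ) : LGraph where
  verts := G.verts.erase v
  adj := fun x y => decide (x ≠ v) && decide (y ≠ v) && G.adj x y
  symm := by
    intro x y
    cases h1 : decide (x ≠ v) <;> cases h2 : decide (y ≠ v) <;>
      simp [h1, h2, G.symm x y]
  loopless := by intro x; simp [G.loopless x]
  adj_mem := by
    intro x y h
    simp only [Bool.and_eq_true, decide_eq_true_eq] at h
    exact ⟨Finset.mem_erase.2 ⟨h.1.1, (G.adj_mem x y h.2).1⟩,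
           Finset.mem_erase.2 ⟨h.1.2, (G.adj_mem x y h.2).2⟩⟩
  fr := G.fr
  sgn := G.sgn

end LGraph

/-! With `M = A(G) + E`, which is symmetric over `𝔽₂`, the three coranks are the dimensions of
`ker M`, of `ker (M + E_vv)`, and of `{x | x v = 0 ∧ M x ∈ 𝔽₂ e_v}` (the kernel of `M` with row and
column `v` deleted). Each of these spaces contains `K₀ = {x ∈ ker M | x v = 0}` with codimension at
most one. Since `⟪x, M y⟫ = ⟪M x, y⟫`, the first and second cannot both exceed `K₀`, nor can the
second and third. If `ker M = K₀`, then `e_v ⊥ ker M`, so `e_v = M w`, and `w` enlarges the second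
space if `w v = 1` and the third if `w v = 0`. So exactly one space exceeds `K₀`; orientedness
rules out `ker M`, hence the other two have different dimensions. -/

open Matrix Module Function

theorem Submodule.finrank_eq_finrank_inf_ker_add {F V : Type*} [Field F] [AddCommGroup V]
    [Module F V] [FiniteDimensional F V] (p : Submodule F V) (f : Dual F V)
    [Decidable (p ≤ LinearMap.ker f)] :
    finrank F p = finrank F ↥(p ⊓ LinearMap.ker f) + if p ≤ LinearMap.ker f then 0 else 1 := by
  split_ifs with hp
  · rw [inf_eq_left.2 hp, add_zero]
  · have hf : f.domRestrict p ≠ 0 := fun h => hp fun x hx => by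
      simpa using LinearMap.congr_fun h ⟨x, hx⟩
    rw [← Dual.finrank_ker_add_one_of_ne_zero hf, LinearMap.ker_domRestrict,
      ← (comapSubtypeEquivOfLe inf_le_left).finrank_eq, comap_inf, comap_subtype_self, top_inf_eq]

section

variable {m F : Type*} [Fintype m] [Field F]

theorem Matrix.card_sub_rank_eq_finrank_ker_s18 {n : Type*} (M : Matrix n m F) :
    Fintype.card m - M.rank = finrank F (LinearMap.ker M.mulVecLin) := by
  have := LinearMap.finrank_range_add_finrank_ker M.mulVecLin
  rw [finrank_fintype_fun_eq_card] at this
  rw [Matrix.rank]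
  omega

theorem Matrix.exists_mulVec_eq_of_forall_vecMul_eq_zero {n : Type*} [Fintype n]
    (M : Matrix n m F) {u : n → F} (h : ∀ x, x ᵥ* M = 0 → x ⬝ᵥ u = 0) : ∃ w, M *ᵥ w = u := by
  classical
  let B : (n → F) →ₗ[F] (m → F) →ₗ[F] F := toLinearMap₂' F M
  have hu : dotProductEquiv F n u ∈ (LinearMap.ker B).dualAnnihilator := by
    rw [Submodule.mem_dualAnnihilator]
    intro x hx
    have : x ᵥ* M = 0 := dotProduct_eq_zero _ fun y => by
      simpa [B, toLinearMap₂'_apply', dotProduct_mulVec] using LinearMap.congr_fun hx y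
    simpa [dotProduct_comm] using h x this
  rw [LinearMap.dualAnnihilator_ker_eq_range_flip] at hu
  obtain ⟨w, hw⟩ := hu
  refine ⟨w, dotProduct_eq _ _ fun x => ?_⟩
  simpa [B, toLinearMap₂'_apply', dotProduct_comm] using LinearMap.congr_fun hw x

theorem Matrix.IsSymm.dotProduct_mulVec_comm {M : Matrix m m F} (hM : M.IsSymm) (x y : m → F) :
    x ⬝ᵥ M *ᵥ y = M *ᵥ x ⬝ᵥ y := by
  rw [dotProduct_mulVec, ← mulVec_transpose, hM.eq]

def Matrix.kerDelete (M : Matrix m m F) (v : m) : Submodule F (m → F) where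
  carrier := {x | x v = 0 ∧ ∀ u ≠ v, (M *ᵥ x) u = 0}
  add_mem' := by simp_all [mulVec_add]
  zero_mem' := by simp
  smul_mem' := by simp_all [mulVec_smul]

theorem Matrix.mem_kerDelete {M : Matrix m m F} {v : m} {x : m → F} :
    x ∈ M.kerDelete v ↔ x v = 0 ∧ ∀ u ≠ v, (M *ᵥ x) u = 0 :=
  Iff.rfl

theorem Matrix.mulVec_extend_apply {n : Type*} [Fintype n] (M : Matrix m m F) {ι : n → m}
    (hι : Injective ι) (y : n → F) (i : n) :
    (M *ᵥ extend ι y 0) (ι i) = (M.submatrix ι ι *ᵥ y) i :=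
  (Fintype.sum_of_injective ι hι _ _ (fun j hj => by simp [extend_apply' _ _ _ hj])
    fun k => by simp [hι.extend_apply]).symm

theorem Matrix.finrank_ker_submatrix_eq_finrank_kerDelete {n : Type*} [Fintype n]
    (M : Matrix m m F) {v : m} {ι : n → m} (hι : Injective ι)
    (hrange : ∀ u, u ∈ Set.range ι ↔ u ≠ v) :
    finrank F (LinearMap.ker (M.submatrix ι ι).mulVecLin) = finrank F (M.kerDelete v) := by
  let E := ExtendByZero.linearMap F ι
  suffices (LinearMap.ker (M.submatrix ι ι).mulVecLin).map E = M.kerDelete v by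
    rw [← this, (Submodule.equivMapOfInjective E (extend_injective hι (0 : m → F)) _).finrank_eq]
  have hv : ¬∃ i, ι i = v := fun hi => (hrange v).1 hi rfl
  ext x
  simp only [Submodule.mem_map, LinearMap.mem_ker, mulVecLin_apply, mem_kerDelete]
  constructor
  · rintro ⟨y, hy, rfl⟩
    refine ⟨extend_apply' _ _ _ hv, fun u hu => ?_⟩
    obtain ⟨i, rfl⟩ := (hrange u).2 hu
    exact (mulVec_extend_apply M hι y i).trans (congrFun hy i)
  · rintro ⟨hxv, hx⟩
    have hxE : extend ι (x ∘ ι) 0 = x := by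
      ext u
      by_cases hu : u = v
      · rw [hu, extend_apply' _ _ _ hv, hxv, Pi.zero_apply]
      · obtain ⟨i, rfl⟩ := (hrange u).2 hu
        exact hι.extend_apply _ _ _
    refine ⟨x ∘ ι, funext fun i => ?_, hxE⟩
    rw [← mulVec_extend_apply M hι, hxE]
    exact hx _ ((hrange _).1 ⟨i, rfl⟩)

end

section

variable {m F : Type*} [Fintype m] [DecidableEq m] [Field F] {M : Matrix m m F} {v : m}

theorem Matrix.add_single_mulVec (M : Matrix m m F) (v : m) (x : m → F) :
    (M + single v v 1) *ᵥ x = M *ᵥ x + Pi.single v (x v) := by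
  rw [add_mulVec, single_mulVec, one_mul, ← Pi.single]

theorem Matrix.ker_add_single_inf_ker_proj :
    LinearMap.ker (M + single v v 1).mulVecLin ⊓ LinearMap.ker (LinearMap.proj v) =
      LinearMap.ker M.mulVecLin ⊓ LinearMap.ker (LinearMap.proj (R := F) v) := by
  ext x
  simp only [Submodule.mem_inf, LinearMap.mem_ker, mulVecLin_apply, LinearMap.proj_apply,
    and_congr_left_iff]
  intro hxv
  rw [add_single_mulVec, hxv, Pi.single_zero, add_zero]

theorem Matrix.kerDelete_inf_ker_proj_comp :
    M.kerDelete v ⊓ LinearMap.ker (LinearMap.proj v ∘ₗ M.mulVecLin) =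
      LinearMap.ker M.mulVecLin ⊓ LinearMap.ker (LinearMap.proj (R := F) v) := by
  ext x
  simp only [Submodule.mem_inf, mem_kerDelete, LinearMap.mem_ker, LinearMap.comp_apply,
    LinearMap.proj_apply, mulVecLin_apply]
  constructor
  · rintro ⟨⟨hxv, hx⟩, hv⟩
    refine ⟨funext fun u => ?_, hxv⟩
    by_cases hu : u = v
    · rw [hu, hv, Pi.zero_apply]
    · exact hx u hu
  · rintro ⟨hx, hxv⟩
    simp [hx, hxv]

theorem Matrix.IsSymm.apply_mul_apply_eq_zero_of_mulVec_eq_zero (hM : M.IsSymm) {x y : m → F}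
    (hx : M *ᵥ x = 0) (hy : (M + single v v 1) *ᵥ y = 0) : x v * y v = 0 := by
  rw [add_single_mulVec, add_eq_zero_iff_eq_neg] at hy
  have := hM.dotProduct_mulVec_comm x y
  rwa [hy, hx, zero_dotProduct, dotProduct_neg, dotProduct_single, neg_eq_zero] at this

theorem Matrix.IsSymm.mulVec_apply_mul_apply_eq_zero_of_mem_kerDelete (hM : M.IsSymm)
    {x y : m → F} (hx : x ∈ M.kerDelete v) (hy : (M + single v v 1) *ᵥ y = 0) :
    (M *ᵥ x) v * y v = 0 := by
  have hMx : M *ᵥ x = Pi.single v ((M *ᵥ x) v) := by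
    ext u
    by_cases hu : u = v
    · rw [hu, Pi.single_eq_same]
    · rw [Pi.single_eq_of_ne hu, hx.2 u hu]
  rw [add_single_mulVec, add_eq_zero_iff_eq_neg] at hy
  have := hM.dotProduct_mulVec_comm x y
  rwa [hy, hMx, dotProduct_neg, dotProduct_single, hx.1, zero_mul, neg_zero, single_dotProduct,
    eq_comm] at this

end

section

variable {m : Type*} [Fintype m] [DecidableEq m] {M : Matrix m m (ZMod 2)} {v : m}

theorem Matrix.IsSymm.exists_mem_kerDelete_or_ker_add_single (hM : M.IsSymm)
    (hK : ∀ x, M *ᵥ x = 0 → x v = 0) :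
    (∃ x ∈ M.kerDelete v, (M *ᵥ x) v ≠ 0) ∨ ∃ y, (M + single v v 1) *ᵥ y = 0 ∧ y v ≠ 0 := by
  obtain ⟨w, hw⟩ := M.exists_mulVec_eq_of_forall_vecMul_eq_zero (u := Pi.single v 1) fun x hx => by
    rw [dotProduct_single, mul_one]
    exact hK x (by rwa [← mulVec_transpose, hM.eq] at hx)
  rcases (by decide : ∀ a : ZMod 2, a = 0 ∨ a = 1) (w v) with hwv | hwv
  · exact Or.inl ⟨w, ⟨hwv, fun u hu => by simp [hw, hu]⟩, by simp [hw]⟩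
  · refine Or.inr ⟨w, ?_, by simp [hwv]⟩
    rw [add_single_mulVec, hw, hwv, ← Pi.single_add, CharTwo.add_self_eq_zero, Pi.single_zero]

theorem Matrix.IsSymm.finrank_ker_add_single_ne_finrank_kerDelete (hM : M.IsSymm)
    (h : finrank (ZMod 2) (LinearMap.ker M.mulVecLin) ≤
      finrank (ZMod 2) (LinearMap.ker (M + single v v 1).mulVecLin)) :
    finrank (ZMod 2) (LinearMap.ker (M + single v v 1).mulVecLin) ≠
      finrank (ZMod 2) (M.kerDelete v) := by
  classical
  have hK := (LinearMap.ker M.mulVecLin).finrank_eq_finrank_inf_ker_add (LinearMap.proj v)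
  have hB := (LinearMap.ker (M + single v v 1).mulVecLin).finrank_eq_finrank_inf_ker_add
    (LinearMap.proj v)
  have hW := (M.kerDelete v).finrank_eq_finrank_inf_ker_add (LinearMap.proj v ∘ₗ M.mulVecLin)
  rw [ker_add_single_inf_ker_proj] at hB
  rw [kerDelete_inf_ker_proj_comp] at hW
  simp only [SetLike.le_def, LinearMap.mem_ker, mulVecLin_apply, LinearMap.proj_apply,
    LinearMap.comp_apply] at hK hB hW
  have hMB : (∀ x, M *ᵥ x = 0 → x v = 0) ∨ ∀ y, (M + single v v 1) *ᵥ y = 0 → y v = 0 := by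
    by_contra! ⟨⟨x, hx, hxv⟩, y, hy, hyv⟩
    exact mul_ne_zero hxv hyv (hM.apply_mul_apply_eq_zero_of_mulVec_eq_zero hx hy)
  have hBW : (∀ y, (M + single v v 1) *ᵥ y = 0 → y v = 0) ∨
      ∀ x ∈ M.kerDelete v, (M *ᵥ x) v = 0 := by
    by_contra! ⟨⟨y, hy, hyv⟩, x, hx, hxv⟩
    exact mul_ne_zero hxv hyv (hM.mulVec_apply_mul_apply_eq_zero_of_mem_kerDelete hx hy)
  split_ifs at hK hB hW with PM PB PW
  · rcases hM.exists_mem_kerDelete_or_ker_add_single PM with ⟨x, hx, hxv⟩ | ⟨y, hy, hyv⟩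
    exacts [absurd (PW hx) hxv, absurd (PB hy) hyv]
  all_goals first | omega | tauto

end

namespace LGraph

theorem A_isSymm (G : LGraph) : G.A.IsSymm :=
  IsSymm.ext fun u w => by
    rcases eq_or_ne (u : ℕ) w with h | h
    · simp [A, h]
    · simp [A, h, Ne.symm h, G.symm]

def deleteEmbedding (G : LGraph) (v : ℕ) : (G.delete v).verts ↪ G.verts :=
  ⟨fun w => ⟨w, Finset.mem_of_mem_erase w.2⟩, fun _ _ h => Subtype.ext (Subtype.mk.inj h)⟩

theorem A_delete (G : LGraph) (v : ℕ) :
    (G.delete v).A = G.A.submatrix (G.deleteEmbedding v) (G.deleteEmbedding v) := by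
  ext w w'
  have hw := (Finset.mem_erase.1 w.2).1
  have hw' := (Finset.mem_erase.1 w'.2).1
  simp only [A, delete, ne_eq, hw, hw', not_false_eq_true, decide_true, Bool.true_and]
  rfl

theorem mem_range_deleteEmbedding (G : LGraph) {v u : G.verts} :
    u ∈ Set.range (G.deleteEmbedding v) ↔ u ≠ v := by
  constructor
  · rintro ⟨w, rfl⟩ h
    exact (Finset.mem_erase.1 w.2).1 (congrArg Subtype.val h)
  · intro hu
    exact ⟨⟨u, Finset.mem_erase.2 ⟨fun h => hu (Subtype.ext h), u.2⟩⟩, rfl⟩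

end LGraph

/-- If the vertex `v` of a labeled graph `G` is oriented,
i.e. `corank (A(G)+E) ≤ corank B_v(G)` where `B_v(G) = A(G)+E+E_{vv}`, then
`corank B_v(G) ≠ corank (A(G−v)+E)`. -/
theorem oriented_vertex_corank (G : LGraph) (v : G.verts)
    (h : G.corankAE ≤ G.corankB v) :
    G.corankB v ≠ (G.delete v).corankAE := by
  have hdelete : (G.delete v).A + 1 =
      (G.A + 1).submatrix (G.deleteEmbedding v) (G.deleteEmbedding v) := by
    rw [G.A_delete, ← submatrix_one_embedding (G.deleteEmbedding v)]
    rfl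
  simp only [LGraph.corankAE, LGraph.corankB, card_sub_rank_eq_finrank_ker_s18] at h ⊢
  rw [hdelete, finrank_ker_submatrix_eq_finrank_kerDelete _ (G.deleteEmbedding v).injective
    fun _ => G.mem_range_deleteEmbedding]
  exact (G.A_isSymm.add isSymm_one).finrank_ker_add_single_ne_finrank_kerDelete h
end
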